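/- arXiv:2507.15632 — 16 statements merged into one kernel-verified Lean document; each statement's English description precedes it below -/
import Mathlib

section
/- For integers 1 ≤ m ≤ n, the total variation distance between the uniform distribution on all maps Fin m → Fin n and the uniform distribution on injective maps Fin m → Fin n is at most m(m−1)/n; explicitly, ∑_{f : Fin m → Fin n} | n^(−m) − χ(f)·(n−m)!/n! | ≤ m(m−1)/n, where χ(f) = 1 if f is injective and χ(f) = 0 otherwise. -/
/-!
Let `K = n (n - 1) ⋯ (n - m + 1)` be the number of injective maps among the `N = n ^ m` maps.
The injective maps each carry the excess `1/K - 1/N` and the others the deficit `1/N`, so the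
distance is exactly `2 (1 - K / N)`. Since `K / N = ∏_{i < m} (1 - i/n)`, the Weierstrass product
inequality `∏ (1 - aᵢ) ≥ 1 - ∑ aᵢ` gives `1 - K / N ≤ ∑_{i < m} i/n = m (m - 1) / (2n)`.
-/

open Finset

theorem Finset.one_sub_sum_le_prod_one_sub {ι R : Type*} [CommRing R] [PartialOrder R]
    [IsOrderedRing R] (s : Finset ι) (f : ι → R) (h0 : ∀ i ∈ s, 0 ≤ f i)
    (h1 : ∀ i ∈ s, f i ≤ 1) : 1 - ∑ i ∈ s, f i ≤ ∏ i ∈ s, (1 - f i) := by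
  classical
  induction s using Finset.induction_on with
  | empty => simp
  | insert a s ha ih =>
    rw [sum_insert ha, prod_insert ha]
    have hfa : 0 ≤ 1 - f a := sub_nonneg.2 (h1 a (mem_insert_self a s))
    have hcross : 0 ≤ f a * ∑ i ∈ s, f i :=
      mul_nonneg (h0 a (mem_insert_self a s))
        (sum_nonneg fun i hi => h0 i (mem_insert_of_mem hi))
    have ih' := ih (fun i hi => h0 i (mem_insert_of_mem hi))
      (fun i hi => h1 i (mem_insert_of_mem hi))
    calc 1 - (f a + ∑ i ∈ s, f i)
        ≤ (1 - f a) * (1 - ∑ i ∈ s, f i) := by linear_combination hcross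
      _ ≤ (1 - f a) * ∏ i ∈ s, (1 - f i) := mul_le_mul_of_nonneg_left ih' hfa

theorem Finset.sum_range_natCast_mul_two {R : Type*} [CommRing R] (m : ℕ) :
    (∑ i ∈ range m, (i : R)) * 2 = m * (m - 1) := by
  induction m with
  | zero => simp
  | succ m ih => rw [sum_range_succ, add_mul, ih]; push_cast; ring

theorem Nat.descFactorial_div_pow_eq_prod (n m : ℕ) (hn : n ≠ 0) :
    (n.descFactorial m : ℝ) / (n : ℝ) ^ m = ∏ i ∈ range m, (1 - (i : ℝ) / n) := by
  have hpow : (n : ℝ) ^ m = ∏ _i ∈ range m, (n : ℝ) := by simp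
  rw [descFactorial_eq_prod_range, ← prod_range_natCast_sub, hpow, ← prod_div_distrib]
  refine prod_congr rfl fun i _ => ?_
  field_simp

theorem Nat.one_sub_le_descFactorial_div_pow {n m : ℕ} (hmn : m ≤ n) :
    1 - (m : ℝ) * (m - 1) / (2 * n) ≤ n.descFactorial m / (n : ℝ) ^ m := by
  rcases Nat.eq_zero_or_pos n with rfl | hn
  · obtain rfl : m = 0 := Nat.le_zero.1 hmn
    simp
  have hn' : (0 : ℝ) < n := Nat.cast_pos.2 hn
  have hsum : (m : ℝ) * (m - 1) / (2 * n) = ∑ i ∈ range m, (i : ℝ) / n := by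
    rw [← sum_div, ← sum_range_natCast_mul_two, mul_comm (2 : ℝ),
      mul_div_mul_right _ _ two_ne_zero]
  rw [descFactorial_div_pow_eq_prod n m hn.ne', hsum]
  refine one_sub_sum_le_prod_one_sub _ _ (fun i _ => by positivity) fun i hi => ?_
  rw [div_le_one hn', Nat.cast_le]
  exact (mem_range.1 hi).le.trans hmn

theorem sum_abs_inv_card_sub_inv_card_filter {α : Type*} [Fintype α] (p : α → Prop)
    [DecidablePred p] (hp : ∃ x, p x) :
    ∑ x, |(Fintype.card α : ℝ)⁻¹ - if p x then (#{x | p x} : ℝ)⁻¹ else 0|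
      = 2 * (1 - #{x | p x} / Fintype.card α) := by
  set k : ℝ := ((#{x | p x} : ℕ) : ℝ)
  set N : ℝ := ((Fintype.card α : ℕ) : ℝ)
  have hk : 0 < k := by
    obtain ⟨x, hx⟩ := hp
    exact Nat.cast_pos.2 (card_pos.2 ⟨x, mem_filter.2 ⟨mem_univ x, hx⟩⟩)
  have hkN : k ≤ N := Nat.cast_le.2 (card_le_univ _)
  have hN : 0 < N := hk.trans_le hkN
  have hcompl : (#{x | ¬p x} : ℝ) = N - k := by
    rw [eq_sub_iff_add_eq', ← Nat.cast_add, card_filter_add_card_filter_not, card_univ]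
  have hin : ∑ x with p x, |N⁻¹ - if p x then k⁻¹ else 0| = k * (k⁻¹ - N⁻¹) := by
    rw [sum_congr rfl fun x hx => by rw [if_pos (mem_filter.1 hx).2], sum_const, nsmul_eq_mul,
      abs_sub_comm, abs_of_nonneg (sub_nonneg.2 (inv_anti₀ hk hkN))]
  have hout : ∑ x with ¬p x, |N⁻¹ - if p x then k⁻¹ else 0| = (N - k) * N⁻¹ := by
    rw [sum_congr rfl fun x hx => by rw [if_neg (mem_filter.1 hx).2], sum_const, nsmul_eq_mul,
      hcompl, sub_zero, abs_of_nonneg (inv_pos.2 hN).le]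
  rw [← sum_filter_add_sum_filter_not univ p, hin, hout]
  field_simp
  ring

theorem card_filter_injective_fin (m n : ℕ) :
    #{f : Fin m → Fin n | Function.Injective f} = n.descFactorial m := by
  rw [← Fintype.card_subtype, Fintype.card_congr (Equiv.subtypeInjectiveEquivEmbedding _ _),
    Fintype.card_embedding_eq, Fintype.card_fin, Fintype.card_fin]

theorem stmt1_general (m n : ℕ) (hmn : m ≤ n) :
    ∑ f : Fin m → Fin n,
        |((n : ℝ) ^ m)⁻¹ -
          (if Function.Injective f then
            (Nat.factorial (n - m) : ℝ) / (Nat.factorial n : ℝ) else 0)|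
      ≤ (m : ℝ) * ((m : ℝ) - 1) / (n : ℝ) := by
  have hcard : (Fintype.card (Fin m → Fin n) : ℝ) = (n : ℝ) ^ m := by simp
  have hmass : ((n - m).factorial : ℝ) / n.factorial = (n.descFactorial m : ℝ)⁻¹ := by
    rw [← Nat.factorial_mul_descFactorial hmn, Nat.cast_mul,
      div_mul_cancel_left₀ (by positivity)]
  have hinj : ∃ f : Fin m → Fin n, Function.Injective f :=
    ⟨Fin.castLE hmn, Fin.castLE_injective hmn⟩
  rw [hmass, ← card_filter_injective_fin, ← hcard, sum_abs_inv_card_sub_inv_card_filter _ hinj,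
    hcard, card_filter_injective_fin]
  have hhalf : (m : ℝ) * (m - 1) / n = 2 * (m * (m - 1) / (2 * n)) := by ring
  linarith [Nat.one_sub_le_descFactorial_div_pow hmn]

theorem stmt1 (m n : ℕ) (hm : 1 ≤ m) (hmn : m ≤ n) :
    ∑ f : Fin m → Fin n,
        |((n : ℝ) ^ m)⁻¹ -
          (if Function.Injective f then
            (Nat.factorial (n - m) : ℝ) / (Nat.factorial n : ℝ) else 0)|
      ≤ (m : ℝ) * ((m : ℝ) - 1) / (n : ℝ) :=
  stmt1_general m n hmn
end

section
/- Let f : Fin m → Fin n be a map and let k ≥ 1 be an integer such that every fiber of f has cardinality at most k, i.e. |f⁻¹(i)| ≤ k for all i ∈ Fin n. Then m ≤ n·k and there exists a permutation g of Fin (n·k) such that f = d_{n,nk} ∘ g ∘ ι_{nk,m}, where ι_{nk,m} : Fin m → Fin (n·k) is the canonical inclusion and d_{n,nk} : Fin (n·k) → Fin n is the standard equipartition. -/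
/-!
Numbering the elements of each fiber `f⁻¹(i)` by elements of `Fin k` makes `x ↦ (f x, number of x)`
an injection `Fin m → Fin n × Fin k ≃ Fin (n * k)` whose composite with the block map is `f`.
Any two injections out of the finite type `Fin m`, here this one and the inclusion, differ by a
permutation of the target.
-/

/-- The standard equipartition `d_{n,nk} : Fin (n*k) → Fin n`, sending the `i`-th
consecutive block of `k` indices to `i` (0-based: `x ↦ ⌊x / k⌋`). -/
def equipart (n k : ℕ) (hk : 0 < k) : Fin (n * k) → Fin n :=
  fun x => ⟨(x : ℕ) / k, (Nat.div_lt_iff_lt_mul hk).mpr x.isLt⟩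

open Function

theorem equipart_finProdFinEquiv {n k : ℕ} (hk : 0 < k) (p : Fin n × Fin k) :
    equipart n k hk (finProdFinEquiv p) = p.1 :=
  congrArg Prod.fst (finProdFinEquiv.symm_apply_apply p)

theorem exists_injective_prod_fin_of_card_fiber_le {α β : Type*} [Fintype α] [DecidableEq β]
    (f : α → β) (k : ℕ) (hf : ∀ b, (Finset.univ.filter (fun a => f a = b)).card ≤ k) :
    ∃ g : α → β × Fin k, Injective g ∧ ∀ a, (g a).1 = f a := by
  have e (b : β) : {a // f a = b} ↪ Fin k :=
    (Embedding.nonempty_of_card_le <| by simpa [Fintype.card_subtype] using hf b).some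
  let g : α ↪ β × Fin k :=
    (Equiv.sigmaFiberEquiv f).symm.toEmbedding.trans
      ((Embedding.sigmaMap (Embedding.refl β) e).trans
        (Equiv.sigmaEquivProd β (Fin k)).toEmbedding)
  exact ⟨g, g.injective, fun a => rfl⟩

theorem stmt2 (m n k : ℕ) (hk : 1 ≤ k) (f : Fin m → Fin n)
    (hfib : ∀ i : Fin n, (Finset.univ.filter (fun j : Fin m => f j = i)).card ≤ k) :
    ∃ (hmk : m ≤ n * k) (g : Equiv.Perm (Fin (n * k))),
      ∀ x : Fin m, f x = equipart n k hk (g (Fin.castLE hmk x)) := by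
  obtain ⟨g, hg, hgf⟩ := exists_injective_prod_fin_of_card_fiber_le f k hfib
  have hmk : m ≤ n * k := by
    simpa using Fintype.card_le_of_injective g hg
  obtain ⟨σ, hσ⟩ := Equiv.Perm.exists_extending_pair (Fin.castLE hmk) (finProdFinEquiv ∘ g)
    (Fin.castLE_injective hmk) (finProdFinEquiv.injective.comp hg)
  refine ⟨hmk, σ, fun x => ?_⟩
  rw [hσ, comp_apply, equipart_finProdFinEquiv, hgf]
end

section
/- Let E be a measurable space, let 1 ≤ m ≤ n be integers, and let μ be an exchangeable probability measure on (Fin n → E). Let ν₁ be the pushforward of μ under x ↦ x ∘ ι, where ι : Fin m → Fin n is the canonical inclusion, and let ν₂ = n^(−m) · ∑_{f : Fin m → Fin n} (pushforward of μ under x ↦ x ∘ f), the average over all n^m maps f of the law of the vector of entries of x sampled along f. Then for every measurable function φ : (Fin m → E) → ℝ with |φ| ≤ 1 everywhere, |∫ φ dν₁ − ∫ φ dν₂| ≤ m(m−1)/n. -/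
open MeasureTheory
open scoped ENNReal

lemma exists_perm_ext {m n : ℕ} (hmn : m ≤ n) (f : Fin m → Fin n) (hf : Function.Injective f) :
    ∃ σ : Equiv.Perm (Fin n), ∀ i, σ (Fin.castLE hmn i) = f i := by
  classical
  set g : Fin m → Fin n := Fin.castLE hmn with hg
  have hginj : Function.Injective g := Fin.castLE_injective hmn
  let e : {x // x ∈ Set.range g} ≃ {x // x ∈ Set.range f} :=
    (Equiv.ofInjective g hginj).symm.trans (Equiv.ofInjective f hf)
  refine ⟨e.extendSubtype, fun i => ?_⟩
  have hx : g i ∈ Set.range g := ⟨i, rfl⟩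
  rw [Equiv.extendSubtype_apply_of_mem e (g i) hx]
  have h1 : (⟨g i, hx⟩ : {x // x ∈ Set.range g}) = Equiv.ofInjective g hginj i := rfl
  rw [h1]
  simp only [e, Equiv.trans_apply, Equiv.symm_apply_apply, Equiv.ofInjective_apply]
  exact congrArg f (Equiv.ofInjective_symm_apply hginj i)

lemma nat_ineq (m n : ℕ) : 2 * n ^ m ≤ 2 * n.descFactorial m + m * (m - 1) * n ^ (m - 1) := by
  induction m with
  | zero => simp
  | succ m ih =>
    rcases Nat.eq_zero_or_pos m with hm | hm
    · subst hm; simp [Nat.descFactorial]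
    rcases le_or_gt m n with h | h
    · have h1 : 2 * n ^ (m + 1) ≤ n * (2 * n.descFactorial m + m * (m - 1) * n ^ (m - 1)) := by
        calc 2 * n ^ (m + 1) = n * (2 * n ^ m) := by ring
        _ ≤ _ := Nat.mul_le_mul_left n ih
      have hd : n.descFactorial m ≤ n ^ m := Nat.descFactorial_le_pow n m
      have h2 : n * (2 * n.descFactorial m + m * (m - 1) * n ^ (m - 1)) ≤
          2 * n.descFactorial (m + 1) + (m + 1) * m * n ^ m := by
        rw [Nat.descFactorial_succ]
        have hn : n * n ^ (m - 1) = n ^ m := by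
          rw [← pow_succ']
          congr 1
          omega
        have key : n * (2 * n.descFactorial m) + m * (m-1) * n ^ m ≤
            2 * ((n - m) * n.descFactorial m) + (m + 1) * m * n ^ m := by
          have : n * (2 * n.descFactorial m) = 2 * ((n - m) * n.descFactorial m) + 2 * m * n.descFactorial m := by
            have : n = (n - m) + m := (Nat.sub_add_cancel h).symm
            nlinarith [this]
          rw [this]
          have h3 : 2 * m * n.descFactorial m ≤ 2 * m * n ^ m := by
            exact Nat.mul_le_mul_left _ hd
          have h4 : m * (m - 1) + 2 * m = (m + 1) * m := by
            cases m with
            | zero => simp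
            | succ k => ring_nf; simp [Nat.succ_sub_one]; ring
          nlinarith [h3, h4]
        calc n * (2 * n.descFactorial m + m * (m - 1) * n ^ (m - 1))
            = n * (2 * n.descFactorial m) + m * (m-1) * (n * n ^ (m-1)) := by ring
          _ = n * (2 * n.descFactorial m) + m * (m-1) * n ^ m := by rw [hn]
          _ ≤ _ := key
      calc 2 * n ^ (m+1) ≤ _ := h1
        _ ≤ _ := h2
        _ = 2 * n.descFactorial (m+1) + (m+1) * ((m+1) - 1) * n ^ ((m+1)-1) := by simp
    · have hd : n.descFactorial (m + 1) = 0 := by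
        rw [Nat.descFactorial_eq_zero_iff_lt]; omega
      rw [hd]
      have : 2 * n ^ (m+1) = 2 * n * n ^ m := by ring
      rw [this]
      have h2n : 2 * n ≤ (m + 1) * m := by nlinarith
      calc 2 * n * n ^ m ≤ (m+1) * m * n ^ m := Nat.mul_le_mul_right _ h2n
        _ ≤ _ := by simp [Nat.succ_sub_one]

theorem stmt3 {E : Type*} [MeasurableSpace E] (m n : ℕ) (hm : 1 ≤ m) (hmn : m ≤ n)
    (μ : Measure (Fin n → E)) [IsProbabilityMeasure μ]
    (hexch : ∀ σ : Equiv.Perm (Fin n), μ.map (fun x => x ∘ ⇑σ) = μ)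
    (ν₁ ν₂ : Measure (Fin m → E))
    (hν₁ : ν₁ = μ.map (fun x => x ∘ Fin.castLE hmn))
    (hν₂ : ν₂ = ((n : ℝ≥0∞) ^ m)⁻¹ • ∑ f : Fin m → Fin n, μ.map (fun x => x ∘ f))
    (φ : (Fin m → E) → ℝ) (hφm : Measurable φ) (hφb : ∀ z, |φ z| ≤ 1) :
    |∫ z, φ z ∂ν₁ - ∫ z, φ z ∂ν₂| ≤ (m : ℝ) * ((m : ℝ) - 1) / (n : ℝ) := by
  classical
  subst hν₁ hν₂
  have hn1 : 1 ≤ n := le_trans hm hmn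
  have hn0 : (0:ℝ) < (n:ℝ) := by exact_mod_cast hn1
  have hmeas : ∀ f : Fin m → Fin n, Measurable (fun x : Fin n → E => x ∘ f) :=
    fun f => measurable_pi_lambda _ fun i => measurable_pi_apply (f i)
  have hprob : ∀ f : Fin m → Fin n, IsProbabilityMeasure (μ.map (fun x => x ∘ f)) :=
    fun f => Measure.isProbabilityMeasure_map (hmeas f).aemeasurable
  have hint : ∀ f : Fin m → Fin n, Integrable φ (μ.map (fun x => x ∘ f)) := by
    intro f
    haveI := hprob f
    exact (integrable_const (1:ℝ)).mono' hφm.aestronglyMeasurable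
      (Filter.Eventually.of_forall fun z => by simpa [Real.norm_eq_abs] using hφb z)
  set I : (Fin m → Fin n) → ℝ := fun f => ∫ z, φ z ∂(μ.map (fun x => x ∘ f)) with hI
  have habs : ∀ f, |I f| ≤ 1 := by
    intro f
    haveI := hprob f
    have := norm_integral_le_of_norm_le_const (μ := μ.map (fun x => x ∘ f)) (f := φ) (C := 1)
      (Filter.Eventually.of_forall fun z => by simpa [Real.norm_eq_abs] using hφb z)
    simpa [Real.norm_eq_abs] using this
  set g : Fin m → Fin n := Fin.castLE hmn with hgdef
  have hinjI : ∀ f : Fin m → Fin n, Function.Injective f → I f = I g := by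
    intro f hf
    obtain ⟨σ, hσ⟩ := exists_perm_ext hmn f hf
    have hσm : Measurable (fun x : Fin n → E => x ∘ ⇑σ) :=
      measurable_pi_lambda _ fun i => measurable_pi_apply (σ i)
    have hcomp : (fun x : Fin n → E => x ∘ f)
        = (fun y : Fin n → E => y ∘ g) ∘ (fun x : Fin n → E => x ∘ ⇑σ) := by
      funext x; funext i
      simp only [Function.comp_apply, Function.comp]
      rw [hσ i]
    simp only [hI, hcomp]
    rw [← Measure.map_map (hmeas g) hσm, hexch σ]
  set c : ℝ := ((n:ℝ)^m)⁻¹ with hc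
  have hI2 : ∫ z, φ z ∂(((n : ℝ≥0∞) ^ m)⁻¹ • ∑ f : Fin m → Fin n, μ.map (fun x => x ∘ f))
      = c * ∑ f : Fin m → Fin n, I f := by
    rw [integral_smul_measure, integral_finset_sum_measure (fun f _ => hint f)]
    rw [smul_eq_mul]
    congr 1
    rw [ENNReal.toReal_inv, hc, ENNReal.toReal_pow, ENNReal.toReal_natCast]
  rw [hI2]
  have hcard : (Finset.univ : Finset (Fin m → Fin n)).card = n ^ m := by
    simp [Finset.card_univ]
  have hc0 : 0 ≤ c := by positivity
  have hcn : c * (n:ℝ)^m = 1 := inv_mul_cancel₀ (by positivity)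
  have hrw : I g - c * ∑ f : Fin m → Fin n, I f
      = c * ∑ f : Fin m → Fin n, (I g - I f) := by
    have h1 : ∑ f : Fin m → Fin n, (I g - I f)
        = (n:ℝ)^m * I g - ∑ f : Fin m → Fin n, I f := by
      rw [Finset.sum_sub_distrib, Finset.sum_const, hcard, nsmul_eq_mul]
      push_cast
      ring
    rw [h1, mul_sub, ← mul_assoc, hcn, one_mul]
  have hIg : (∫ z, φ z ∂(μ.map fun x => x ∘ Fin.castLE hmn)) = I g := rfl
  rw [hIg, hrw]
  have hterm : ∀ f : Fin m → Fin n,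
      |I g - I f| ≤ if Function.Injective f then (0:ℝ) else 2 := by
    intro f
    by_cases hf : Function.Injective f
    · simp [hf, hinjI f hf]
    · simp only [hf, if_false]
      have := norm_sub_le (I g) (I f)
      simp only [Real.norm_eq_abs] at this
      linarith [habs g, habs f]
  have hcinj : (Finset.univ.filter fun f : Fin m → Fin n => Function.Injective f).card
      = n.descFactorial m := by
    rw [← Fintype.card_subtype]
    have := Fintype.card_congr (Equiv.subtypeInjectiveEquivEmbedding (Fin m) (Fin n))
    rw [Fintype.card_embedding_eq] at this
    simpa using this
  have hcnon : (Finset.univ.filter fun f : Fin m → Fin n => ¬ Function.Injective f).card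
      = n ^ m - n.descFactorial m := by
    have h := Finset.card_filter_add_card_filter_not
      (s := (Finset.univ : Finset (Fin m → Fin n)))
      (p := fun f => Function.Injective f)
    rw [hcard, hcinj] at h
    omega
  have hsumb : ∑ f : Fin m → Fin n, (if Function.Injective f then (0:ℝ) else 2)
      = 2 * ((n ^ m - n.descFactorial m : ℕ) : ℝ) := by
    rw [Finset.sum_ite, Finset.sum_const, Finset.sum_const, hcnon]
    simp [mul_comm]
  have hnat : (2 * (n ^ m - n.descFactorial m) : ℕ) ≤ m * (m - 1) * n ^ (m - 1) := by
    have h1 := nat_ineq m n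
    have h2 := Nat.descFactorial_le_pow n m
    omega
  calc |c * ∑ f : Fin m → Fin n, (I g - I f)|
      = c * |∑ f : Fin m → Fin n, (I g - I f)| := by
        rw [abs_mul, abs_of_nonneg hc0]
    _ ≤ c * ∑ f : Fin m → Fin n, |I g - I f| := by
        gcongr
        exact Finset.abs_sum_le_sum_abs _ _
    _ ≤ c * ∑ f : Fin m → Fin n, (if Function.Injective f then (0:ℝ) else 2) := by
        gcongr with f
        · exact hterm f
    _ = c * (2 * ((n ^ m - n.descFactorial m : ℕ) : ℝ)) := by rw [hsumb]
    _ ≤ c * ((m * (m - 1) * n ^ (m - 1) : ℕ) : ℝ) := by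
        gcongr
        calc (2 * ((n ^ m - n.descFactorial m : ℕ) : ℝ))
            = ((2 * (n ^ m - n.descFactorial m) : ℕ) : ℝ) := by push_cast; ring
          _ ≤ _ := by exact_mod_cast hnat
    _ = (m : ℝ) * ((m : ℝ) - 1) / (n : ℝ) := by
        have hpow : (n:ℝ)^m = (n:ℝ) * (n:ℝ)^(m-1) := by
          rw [← pow_succ']
          congr 1
          omega
        rw [hc, hpow]
        push_cast [Nat.cast_sub hm]
        field_simp
end

section
/- Let E be a measurable space, let 1 ≤ m ≤ n be integers, and let μ be a probability measure on arrays (Fin n → Fin n → E) that is jointly exchangeable, i.e. for every permutation σ of Fin n the pushforward of μ under X ↦ (fun i j => X (σ i) (σ j)) equals μ. Let ν₁ be the pushforward of μ under X ↦ (fun (a b : Fin m) => X (ι a) (ι b)), where ι : Fin m → Fin n is the canonical inclusion (the principal m × m subarray), and let ν₂ = n^(−m) · ∑_{f : Fin m → Fin n} (pushforward of μ under X ↦ (fun a b => X (f a) (f b))). Then for every measurable function φ : (Fin m → Fin m → E) → ℝ with |φ| ≤ 1 everywhere, |∫ φ dν₁ − ∫ φ dν₂| ≤ m(m−1)/n.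 -/
open MeasureTheory
open scoped ENNReal

/-!
For an injective `f : Fin m → Fin n`, joint exchangeability makes the law of the subarray
`X (f a) (f b)` equal to that of the principal subarray, since some permutation of `Fin n` carries
`Fin.castLE` to `f`. So in the average defining `ν₂` only the non-injective `f` can differ from
`ν₁`, each by at most `2` in the integral of `φ`. Their proportion is
`1 - n.descFactorial m / n ^ m ≤ m (m - 1) / (2 n)` (the birthday bound).
-/

theorem card_filter_not_injective {α β : Type*} [Fintype α] [Fintype β] [DecidableEq α]
    [DecidableEq β] :
    (Finset.univ.filter fun f : α → β => ¬ Function.Injective f).card =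
      Fintype.card β ^ Fintype.card α - (Fintype.card β).descFactorial (Fintype.card α) := by
  have hinj : (Finset.univ.filter fun f : α → β => Function.Injective f).card =
      (Fintype.card β).descFactorial (Fintype.card α) := by
    rw [← Fintype.card_subtype, Fintype.card_congr (Equiv.subtypeInjectiveEquivEmbedding α β),
      Fintype.card_embedding_eq]
  rw [← hinj, ← Fintype.card_fun, ← Finset.card_univ, ← Finset.card_filter_add_card_filter_not
    (s := Finset.univ) (fun f : α → β => Function.Injective f), Nat.add_sub_cancel_left]

theorem two_mul_mul_pow_sub_descFactorial_le {n m : ℕ} (h : m ≤ n) :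
    2 * n * ((n : ℝ) ^ m - n.descFactorial m) ≤ m * (m - 1) * n ^ m := by
  induction m with
  | zero => simp
  | succ k ih =>
    have hd : (n.descFactorial k : ℝ) ≤ n ^ k := by exact_mod_cast Nat.descFactorial_le_pow n k
    have hn : (0 : ℝ) ≤ n := by positivity
    have ih := ih (by omega)
    rw [Nat.descFactorial_succ, Nat.cast_mul, Nat.cast_sub (by omega), pow_succ]
    push_cast
    nlinarith [mul_le_mul_of_nonneg_left ih hn,
      mul_le_mul_of_nonneg_left hd (mul_nonneg hn (Nat.cast_nonneg k))]

theorem two_mul_pow_sub_descFactorial_div_le {n m : ℕ} (h : m ≤ n) :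
    2 * ((n : ℝ) ^ m - n.descFactorial m) / n ^ m ≤ m * (m - 1) / n := by
  rcases Nat.eq_zero_or_pos n with rfl | hn
  · obtain rfl : m = 0 := by omega
    simp
  rw [div_le_div_iff₀ (by positivity) (by positivity)]
  nlinarith [two_mul_mul_pow_sub_descFactorial_le h]

theorem abs_sub_average_le {ι : Type*} [Fintype ι] [Nonempty ι] (x : ι → ℝ) (i₀ : ι)
    (s : Finset ι) (hs : ∀ i ∉ s, x i = x i₀) (hx : ∀ i, |x i| ≤ 1) :
    |x i₀ - (Fintype.card ι : ℝ)⁻¹ * ∑ i, x i| ≤ 2 * s.card / Fintype.card ι := by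
  have hcard : (0 : ℝ) < Fintype.card ι := by exact_mod_cast Fintype.card_pos
  have hsum : ∑ i, (x i₀ - x i) = ∑ i ∈ s, (x i₀ - x i) :=
    (Finset.sum_subset (Finset.subset_univ s) fun i _ hi => by simp [hs i hi]).symm
  have hterm : ∀ i, |x i₀ - x i| ≤ 2 := fun i =>
    (abs_sub _ _).trans (by linarith [hx i₀, hx i])
  have hdiff : x i₀ - (Fintype.card ι : ℝ)⁻¹ * ∑ i, x i =
      (∑ i ∈ s, (x i₀ - x i)) / Fintype.card ι := by
    rw [← hsum, Finset.sum_sub_distrib, Finset.sum_const, Finset.card_univ, nsmul_eq_mul]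
    field_simp
  calc |x i₀ - (Fintype.card ι : ℝ)⁻¹ * ∑ i, x i|
      = |∑ i ∈ s, (x i₀ - x i)| / Fintype.card ι := by rw [hdiff, abs_div, abs_of_pos hcard]
    _ ≤ 2 * s.card / Fintype.card ι := by
        gcongr
        refine (Finset.abs_sum_le_sum_abs _ _).trans ?_
        simpa [mul_comm] using Finset.sum_le_card_nsmul s _ 2 fun i _ => hterm i

def subarray {ι κ E : Type*} (f : ι → κ) (X : κ → κ → E) : ι → ι → E :=
  fun a b => X (f a) (f b)

section subarray

variable {ι κ E : Type*} [MeasurableSpace E]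

theorem measurable_subarray (f : ι → κ) : Measurable (subarray (E := E) f) := by
  unfold subarray
  fun_prop

theorem map_subarray_eq_of_injective [Finite ι] {μ : Measure (κ → κ → E)}
    (hexch : ∀ σ : Equiv.Perm κ, μ.map (subarray σ) = μ) {f g : ι → κ}
    (hf : Function.Injective f) (hg : Function.Injective g) :
    μ.map (subarray f) = μ.map (subarray g) := by
  obtain ⟨σ, hσ⟩ := Equiv.Perm.exists_extending_pair f g hf hg
  have hgσ : subarray (E := E) g = subarray f ∘ subarray σ := by
    funext X a b
    simp [subarray, hσ]
  rw [hgσ, ← Measure.map_map (measurable_subarray f) (measurable_subarray σ), hexch]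

end subarray

theorem abs_integral_le_one {α : Type*} [MeasurableSpace α] {ν : Measure α}
    [IsProbabilityMeasure ν] {φ : α → ℝ} (hφ : ∀ z, |φ z| ≤ 1) : |∫ z, φ z ∂ν| ≤ 1 := by
  simpa using norm_integral_le_of_norm_le_const (μ := ν) (C := 1)
    (.of_forall fun z => (Real.norm_eq_abs _).trans_le (hφ z))

theorem stmt4_general {E : Type*} [MeasurableSpace E] (m n : ℕ) (hmn : m ≤ n)
    (μ : Measure (Fin n → Fin n → E)) [IsProbabilityMeasure μ]
    (hexch : ∀ σ : Equiv.Perm (Fin n),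
      μ.map (fun X => fun i j => X (σ i) (σ j)) = μ)
    (ν₁ ν₂ : Measure (Fin m → Fin m → E))
    (hν₁ : ν₁ = μ.map
      (fun X => fun (a b : Fin m) => X (Fin.castLE hmn a) (Fin.castLE hmn b)))
    (hν₂ : ν₂ = ((n : ℝ≥0∞) ^ m)⁻¹ •
      ∑ f : Fin m → Fin n, μ.map (fun X => fun a b => X (f a) (f b)))
    (φ : (Fin m → Fin m → E) → ℝ) (hφm : Measurable φ) (hφb : ∀ z, |φ z| ≤ 1) :
    |∫ z, φ z ∂ν₁ - ∫ z, φ z ∂ν₂| ≤ (m : ℝ) * ((m : ℝ) - 1) / (n : ℝ) := by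
  classical
  let x (f : Fin m → Fin n) : ℝ := ∫ z, φ z ∂(μ.map (subarray f))
  have hprob (f : Fin m → Fin n) : IsProbabilityMeasure (μ.map (subarray f)) :=
    Measure.isProbabilityMeasure_map (measurable_subarray f).aemeasurable
  have hν₂x : ∫ z, φ z ∂ν₂ = (Fintype.card (Fin m → Fin n) : ℝ)⁻¹ * ∑ f, x f := by
    rw [hν₂, integral_smul_measure, integral_finsetSum_measure fun f _ =>
      .of_bound hφm.aestronglyMeasurable 1 (.of_forall hφb)]
    simp only [smul_eq_mul, Fintype.card_fun, Fintype.card_fin, ENNReal.toReal_inv,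
      ENNReal.toReal_pow, ENNReal.toReal_natCast, Nat.cast_pow]
    rfl
  set s := Finset.univ.filter fun f : Fin m → Fin n => ¬ Function.Injective f with hs_def
  have hs : ∀ f ∉ s, x f = x (Fin.castLE hmn) := fun f hf => by
    simp only [x, map_subarray_eq_of_injective hexch (by simpa [hs_def] using hf)
      (Fin.castLE_injective hmn)]
  have : Nonempty (Fin m → Fin n) := ⟨Fin.castLE hmn⟩
  calc |∫ z, φ z ∂ν₁ - ∫ z, φ z ∂ν₂|
      = |x (Fin.castLE hmn) - (Fintype.card (Fin m → Fin n) : ℝ)⁻¹ * ∑ f, x f| := by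
        rw [hν₁, hν₂x]; rfl
    _ ≤ 2 * s.card / Fintype.card (Fin m → Fin n) :=
        abs_sub_average_le x _ _ hs fun f => abs_integral_le_one hφb
    _ = 2 * ((n : ℝ) ^ m - n.descFactorial m) / n ^ m := by
        rw [hs_def, card_filter_not_injective, Nat.cast_sub] <;> simp [Nat.descFactorial_le_pow]
    _ ≤ m * (m - 1) / n := two_mul_pow_sub_descFactorial_div_le hmn

theorem stmt4 {E : Type*} [MeasurableSpace E] (m n : ℕ) (hm : 1 ≤ m) (hmn : m ≤ n)
    (μ : Measure (Fin n → Fin n → E)) [IsProbabilityMeasure μ]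
    (hexch : ∀ σ : Equiv.Perm (Fin n),
      μ.map (fun X => fun i j => X (σ i) (σ j)) = μ)
    (ν₁ ν₂ : Measure (Fin m → Fin m → E))
    (hν₁ : ν₁ = μ.map
      (fun X => fun (a b : Fin m) => X (Fin.castLE hmn a) (Fin.castLE hmn b)))
    (hν₂ : ν₂ = ((n : ℝ≥0∞) ^ m)⁻¹ •
      ∑ f : Fin m → Fin n, μ.map (fun X => fun a b => X (f a) (f b)))
    (φ : (Fin m → Fin m → E) → ℝ) (hφm : Measurable φ) (hφb : ∀ z, |φ z| ≤ 1) :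
    |∫ z, φ z ∂ν₁ - ∫ z, φ z ∂ν₂| ≤ (m : ℝ) * ((m : ℝ) - 1) / (n : ℝ) :=
  stmt4_general m n hmn μ hexch ν₁ ν₂ hν₁ hν₂ φ hφm hφb
end

section
/- Let m, n ≥ 1 be integers with m dividing n. There exists a probability distribution w on pairs (F, Ψ) of maps Fin n → Fin m (a coupling) such that: the first marginal of w is the uniform distribution on all m^n maps Fin n → Fin m; the second marginal of w equals the distribution of d_{m,n} ∘ G, where G is a uniformly random permutation of Fin n and d_{m,n} is the standard equipartition; and the expected normalized Hamming distance satisfies ∑_{(F,Ψ)} w(F,Ψ) · (#{i ∈ Fin n : F(i) ≠ Ψ(i)} / n) ≤ √( m(m−1) / (n/m) ) = √( m²(m−1)/n ). -/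
/-!
Sample `F` uniformly, then a permutation `g` uniformly among those with `d ∘ g` within Hamming
distance `fiberExcess (n / m) F` of `F` (the number of points lying in overfull fibers beyond their
capacity `n / m`), and set `Ψ = d ∘ g`. Such `g` exist: moving a point from an overfull to an
underfull fiber lowers the excess, and a map all of whose fibers have size `n / m` is `d ∘ g` for
some `g`. Permuting the coordinates of `F` and `g` jointly preserves the construction, so `g` is
uniformly distributed and `Ψ` has the law of `d ∘ G`. Finally the excess is at most
`∑ⱼ |Nⱼ(F) - n/m|` for the fiber sizes `Nⱼ(F)`; each `Nⱼ(F) - n/m` is a sum of `n` independent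
centred terms, so Cauchy–Schwarz bounds the mean excess by `√(n(m-1))`.
-/

def dmap (m n : ℕ) (hn : 0 < n) (hdvd : m ∣ n) : Fin n → Fin m :=
  fun x => ⟨(x : ℕ) / (n / m), by
    have hm : 0 < m := Nat.pos_of_dvd_of_pos hdvd hn
    have hb : 0 < n / m := Nat.div_pos (Nat.le_of_dvd hn hdvd) hm
    refine (Nat.div_lt_iff_lt_mul hb).mpr ?_
    have hnm : m * (n / m) = n := Nat.mul_div_cancel' hdvd
    have := x.isLt
    omega⟩

open Finset Function

section Fibers

variable {α β : Type*} [Fintype α] [DecidableEq β]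

theorem sum_card_fiber [Fintype β] (F : α → β) : ∑ b, #{a | F a = b} = Fintype.card α :=
  (card_eq_sum_card_fiberwise fun a _ => mem_univ (F a)).symm

theorem card_eq_mul_of_card_fiber_eq [Fintype β] {F : α → β} {s : ℕ}
    (h : ∀ b, #{a | F a = b} = s) : Fintype.card α = Fintype.card β * s := by
  simp [← sum_card_fiber F, h]

theorem card_filter_comp_perm (p : α → Prop) [DecidablePred p] (σ : Equiv.Perm α) :
    #{a | p (σ a)} = #{a | p a} := by
  simp only [card_filter]
  exact Equiv.sum_comp σ (fun a => if p a then 1 else 0)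

theorem hammingDist_comp_perm (F G : α → β) (σ : Equiv.Perm α) :
    hammingDist (F ∘ σ) (G ∘ σ) = hammingDist F G :=
  card_filter_comp_perm (fun a => F a ≠ G a) σ

theorem exists_perm_comp_eq_of_card_fiber_eq {F G : α → β}
    (h : ∀ b, #{a | F a = b} = #{a | G a = b}) : ∃ σ : Equiv.Perm α, G ∘ σ = F := by
  have e (b : β) : {a // F a = b} ≃ {a // G a = b} :=
    Fintype.equivOfCardEq (by simpa only [Fintype.card_subtype] using h b)
  refine ⟨(Equiv.sigmaFiberEquiv F).symm.trans
    ((Equiv.sigmaCongrRight e).trans (Equiv.sigmaFiberEquiv G)), funext fun a => ?_⟩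
  exact (e (F a) ⟨a, rfl⟩).2

variable [DecidableEq α]

theorem card_fiber_update_add (F : α → β) (i : α) (k b : β) :
    #{a | update F i k a = b} + (if F i = b then 1 else 0)
      = #{a | F a = b} + (if k = b then 1 else 0) := by
  simp only [card_filter]
  rw [← add_sum_erase _ _ (mem_univ i),
    ← add_sum_erase _ (fun a => if F a = b then 1 else 0) (mem_univ i),
    sum_congr rfl fun a ha => by rw [update_of_ne (ne_of_mem_erase ha)], update_self]
  ring

theorem hammingDist_update_le (F : α → β) (i : α) (k : β) :
    hammingDist F (update F i k) ≤ 1 := by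
  refine (card_le_card fun a ha => mem_singleton.2 ?_).trans (card_singleton i).le
  by_contra hai
  exact (mem_filter.1 ha).2 (update_of_ne hai k F).symm

end Fibers

section Repair

variable {α β : Type*} [Fintype α] [Fintype β] [DecidableEq β]

def fiberExcess (s : ℕ) (F : α → β) : ℕ := ∑ b, (#{a | F a = b} - s)

variable {s : ℕ}

theorem fiberExcess_comp_perm (F : α → β) (σ : Equiv.Perm α) :
    fiberExcess s (F ∘ σ) = fiberExcess s F :=
  sum_congr rfl fun b _ => by rw [comp_def, card_filter_comp_perm (fun a => F a = b) σ]

theorem card_fiber_eq_of_fiberExcess_eq_zero (hs : Fintype.card α = Fintype.card β * s)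
    {F : α → β} (h : fiberExcess s F = 0) (b : β) : #{a | F a = b} = s := by
  have hle (b : β) : #{a | F a = b} ≤ s := by
    have := sum_eq_zero_iff.1 h b (mem_univ b)
    omega
  have hsum : ∑ b, #{a | F a = b} = ∑ _b : β, s := by
    rw [sum_card_fiber, sum_const, card_univ, smul_eq_mul, hs]
  exact (sum_eq_sum_iff_of_le fun b _ => hle b).1 hsum b (mem_univ b)

variable [DecidableEq α]

theorem exists_fiberExcess_update_lt (hs : Fintype.card α = Fintype.card β * s)
    {F : α → β} (h : fiberExcess s F ≠ 0) :
    ∃ i k, fiberExcess s (update F i k) < fiberExcess s F := by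
  obtain ⟨j, -, hj⟩ := exists_ne_zero_of_sum_ne_zero h
  obtain ⟨k, hk⟩ : ∃ k, #{a | F a = k} < s := by
    by_contra! hge
    have := sum_lt_sum (fun b _ => hge b) ⟨j, mem_univ j, by omega⟩
    rw [sum_card_fiber, sum_const, card_univ, smul_eq_mul, hs] at this
    exact this.false
  obtain ⟨i, hi⟩ : ∃ i, F i = j := by
    obtain ⟨i, hi⟩ := card_pos.1 (show 0 < #{a | F a = j} by omega)
    exact ⟨i, (mem_filter.1 hi).2⟩
  refine ⟨i, k, sum_lt_sum (fun b _ => ?_) ⟨j, mem_univ j, ?_⟩⟩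
  · have := card_fiber_update_add F i k b
    rw [hi] at this
    split_ifs at this <;> subst_vars <;> omega
  · have := card_fiber_update_add F i k j
    rw [hi, if_pos rfl, if_neg (by rintro rfl; omega)] at this
    omega

theorem exists_card_fiber_eq_hammingDist_le (hs : Fintype.card α = Fintype.card β * s)
    (F : α → β) :
    ∃ Ψ : α → β, (∀ b, #{a | Ψ a = b} = s) ∧ hammingDist F Ψ ≤ fiberExcess s F := by
  induction h : fiberExcess s F using Nat.strong_induction_on generalizing F with
  | _ e ih =>
    by_cases he : e = 0
    · subst he
      exact ⟨F, card_fiber_eq_of_fiberExcess_eq_zero hs h, by simp⟩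
    obtain ⟨i, k, hlt⟩ := exists_fiberExcess_update_lt hs (h ▸ he)
    obtain ⟨Ψ, hΨ, hdist⟩ := ih _ (h ▸ hlt) (update F i k) rfl
    refine ⟨Ψ, hΨ, (hammingDist_triangle F (update F i k) Ψ).trans ?_⟩
    have := hammingDist_update_le F i k
    omega

end Repair

section Coupling

variable {α β : Type*} [Fintype α] [DecidableEq α] [Fintype β] [DecidableEq β]
variable (s : ℕ) (d : α → β)

def nearPerms (F : α → β) : Finset (Equiv.Perm α) :=
  {g | hammingDist F (d ∘ g) ≤ fiberExcess s F}

theorem nearPerms_nonempty (hd : ∀ b, #{a | d a = b} = s) (F : α → β) :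
    (nearPerms s d F).Nonempty := by
  obtain ⟨Ψ, hΨ, hdist⟩ :=
    exists_card_fiber_eq_hammingDist_le (card_eq_mul_of_card_fiber_eq hd) F
  obtain ⟨g, rfl⟩ := exists_perm_comp_eq_of_card_fiber_eq fun b => (hΨ b).trans (hd b).symm
  exact ⟨g, mem_filter.2 ⟨mem_univ g, hdist⟩⟩

theorem mul_mem_nearPerms_comp_iff (F : α → β) (g σ : Equiv.Perm α) :
    g * σ ∈ nearPerms s d (F ∘ σ) ↔ g ∈ nearPerms s d F := by
  simp only [nearPerms, mem_filter, mem_univ, true_and, Equiv.Perm.coe_mul, ← comp_assoc,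
    hammingDist_comp_perm, fiberExcess_comp_perm]

theorem card_nearPerms_comp_perm (F : α → β) (σ : Equiv.Perm α) :
    #(nearPerms s d (F ∘ σ)) = #(nearPerms s d F) := by
  refine card_bij' (fun g _ => g * σ⁻¹) (fun g _ => g * σ) (fun g hg => ?_) (fun g hg => ?_)
    (fun g _ => inv_mul_cancel_right g σ) (fun g _ => mul_inv_cancel_right g σ)
  · rwa [← mul_mem_nearPerms_comp_iff, inv_mul_cancel_right]
  · rwa [mul_mem_nearPerms_comp_iff]

noncomputable def permKernel (F : α → β) (g : Equiv.Perm α) : ℝ :=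
  if g ∈ nearPerms s d F then (#(nearPerms s d F) : ℝ)⁻¹ else 0

theorem permKernel_nonneg (F : α → β) (g : Equiv.Perm α) : 0 ≤ permKernel s d F g := by
  unfold permKernel; split_ifs <;> positivity

theorem sum_permKernel (hd : ∀ b, #{a | d a = b} = s) (F : α → β) :
    ∑ g, permKernel s d F g = 1 := by
  simp only [permKernel]
  rw [sum_ite_mem, univ_inter, sum_const, nsmul_eq_mul]
  exact mul_inv_cancel₀ (Nat.cast_ne_zero.2 (nearPerms_nonempty s d hd F).card_pos.ne')

theorem permKernel_comp_perm (F : α → β) (g σ : Equiv.Perm α) :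
    permKernel s d (F ∘ σ) (g * σ) = permKernel s d F g := by
  simp only [permKernel, mul_mem_nearPerms_comp_iff, card_nearPerms_comp_perm]

theorem sum_permKernel_left (hd : ∀ b, #{a | d a = b} = s) (g : Equiv.Perm α) :
    ∑ F, permKernel s d F g = Fintype.card β ^ Fintype.card α / (Fintype.card α).factorial := by
  have hconst (g : Equiv.Perm α) : ∑ F, permKernel s d F g = ∑ F, permKernel s d F 1 := by
    rw [← (Equiv.arrowCongr g.symm (.refl β)).sum_comp, ← one_mul g]
    exact sum_congr rfl fun F _ => permKernel_comp_perm s d F 1 g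
  have htotal : ∑ g : Equiv.Perm α, ∑ F, permKernel s d F g = Fintype.card β ^ Fintype.card α := by
    rw [sum_comm, sum_congr rfl fun F _ => sum_permKernel s d hd F]
    simp
  simp only [hconst, sum_const, card_univ, Fintype.card_perm, nsmul_eq_mul] at htotal
  rw [hconst, eq_div_iff (by positivity), ← htotal, mul_comm]

noncomputable def permCoupling (p : (α → β) × (α → β)) : ℝ :=
  ((Fintype.card β : ℝ) ^ Fintype.card α)⁻¹ *
    ∑ g ∈ {g : Equiv.Perm α | (fun a => d (g a)) = p.2}, permKernel s d p.1 g

theorem permCoupling_nonneg (p : (α → β) × (α → β)) : 0 ≤ permCoupling s d p :=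
  mul_nonneg (by positivity) (sum_nonneg fun g _ => permKernel_nonneg s d p.1 g)

theorem sum_permCoupling_fst (hd : ∀ b, #{a | d a = b} = s) (F : α → β) :
    ∑ Ψ, permCoupling s d (F, Ψ) = ((Fintype.card β : ℝ) ^ Fintype.card α)⁻¹ := by
  simp only [permCoupling, ← mul_sum]
  rw [sum_fiberwise, sum_permKernel s d hd, mul_one]

theorem sum_permCoupling_snd (hd : ∀ b, #{a | d a = b} = s) (Ψ : α → β) :
    ∑ F, permCoupling s d (F, Ψ) =
      #{g : Equiv.Perm α | (fun a => d (g a)) = Ψ} / (Fintype.card α).factorial := by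
  simp only [permCoupling, ← mul_sum]
  rw [sum_comm, sum_congr rfl fun g _ => sum_permKernel_left s d hd g, sum_const, nsmul_eq_mul]
  have : (Fintype.card β : ℝ) ^ Fintype.card α ≠ 0 := by
    have : Nonempty (α → β) := ⟨Ψ⟩
    exact_mod_cast (Fintype.card_fun (α := α) (β := β)) ▸ Fintype.card_ne_zero
  field_simp

theorem sum_permCoupling_mul_hammingDist_le (hd : ∀ b, #{a | d a = b} = s) :
    ∑ p : (α → β) × (α → β), permCoupling s d p * hammingDist p.1 p.2
      ≤ ((Fintype.card β : ℝ) ^ Fintype.card α)⁻¹ * ∑ F : α → β, (fiberExcess s F : ℝ) := by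
  have hkernel (F : α → β) (g : Equiv.Perm α) :
      permKernel s d F g * hammingDist F (d ∘ g) ≤ permKernel s d F g * fiberExcess s F := by
    unfold permKernel
    split_ifs with hg
    · exact mul_le_mul_of_nonneg_left (by exact_mod_cast (mem_filter.1 hg).2) (by positivity)
    · simp
  simp only [permCoupling, Fintype.sum_prod_type, mul_assoc, ← mul_sum]
  gcongr with F
  calc ∑ Ψ, (∑ g with (fun a => d (g a)) = Ψ, permKernel s d F g) * hammingDist F Ψ
      = ∑ Ψ, ∑ g with (fun a => d (g a)) = Ψ, permKernel s d F g * hammingDist F (d ∘ g) := by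
        refine sum_congr rfl fun Ψ _ => ?_
        rw [sum_mul]
        exact sum_congr rfl fun g hg => by rw [← (mem_filter.1 hg).2]; rfl
    _ = ∑ g, permKernel s d F g * hammingDist F (d ∘ g) := sum_fiberwise _ _ _
    _ ≤ ∑ g, permKernel s d F g * fiberExcess s F := sum_le_sum fun g _ => hkernel F g
    _ = fiberExcess s F := by rw [← sum_mul, sum_permKernel s d hd, one_mul]

end Coupling

section Variance

variable {α β : Type*} [Fintype α] [DecidableEq α] [Fintype β]

theorem card_mul_sum_comp_eval (a : α) (h : β → ℝ) :
    Fintype.card β * ∑ F : α → β, h (F a) = Fintype.card β ^ Fintype.card α * ∑ c, h c := by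
  rw [← (Equiv.funSplitAt a β).symm.sum_comp, Fintype.sum_prod_type]
  simp only [Equiv.funSplitAt_symm_apply, dif_pos, sum_const, card_univ, Fintype.card_fun,
    Fintype.card_subtype_compl, Fintype.card_unique, nsmul_eq_mul, Nat.cast_pow, ← mul_sum]
  rw [← mul_assoc, ← pow_succ', Nat.sub_add_cancel (Fintype.card_pos_iff.2 ⟨a⟩)]

theorem sum_comp_eval_mul_comp_eval_eq_zero {a a' : α} (ha : a ≠ a') (u v : β → ℝ)
    (hu : ∑ c, u c = 0) : ∑ F : α → β, u (F a) * v (F a') = 0 := by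
  rw [← (Equiv.funSplitAt a β).symm.sum_comp, Fintype.sum_prod_type]
  simp [Equiv.funSplitAt, ha.symm, ← mul_sum, ← sum_mul, hu]

theorem card_mul_sum_sq_sum_comp (g : β → ℝ) (hg : ∑ c, g c = 0) :
    Fintype.card β * ∑ F : α → β, (∑ a, g (F a)) ^ 2
      = Fintype.card β ^ Fintype.card α * (Fintype.card α * ∑ c, g c ^ 2) := by
  have hdiag (a : α) : ∑ F : α → β, ∑ a', g (F a) * g (F a') = ∑ F : α → β, g (F a) ^ 2 := by
    rw [sum_comm, sum_eq_single a
      (fun a' _ ha' => sum_comp_eval_mul_comp_eval_eq_zero (Ne.symm ha') g g hg) (by simp)]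
    simp_rw [sq]
  calc Fintype.card β * ∑ F : α → β, (∑ a, g (F a)) ^ 2
      = Fintype.card β * ∑ a, ∑ F : α → β, ∑ a', g (F a) * g (F a') := by
        simp_rw [sq, sum_mul_sum]
        rw [sum_comm]
    _ = ∑ a, Fintype.card β * ∑ F : α → β, g (F a) ^ 2 := by
        simp_rw [hdiag, mul_sum (s := univ (α := α))]
    _ = _ := by
        simp_rw [card_mul_sum_comp_eval _ (g · ^ 2), sum_const, card_univ, nsmul_eq_mul]
        ring

variable [DecidableEq β]

theorem card_mul_sum_sq_card_fiber_sub (b : β) :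
    Fintype.card β * ∑ F : α → β, ((#{a | F a = b} : ℝ) - Fintype.card α / Fintype.card β) ^ 2
      = Fintype.card β ^ Fintype.card α * (Fintype.card α * (1 - 1 / Fintype.card β)) := by
  have : Nonempty β := ⟨b⟩
  have hβ : (Fintype.card β : ℝ) ≠ 0 := Nat.cast_ne_zero.2 Fintype.card_ne_zero
  set g : β → ℝ := fun c => (if c = b then 1 else 0) - 1 / Fintype.card β
  have hfiber (F : α → β) :
      (#{a | F a = b} : ℝ) - Fintype.card α / Fintype.card β = ∑ a, g (F a) := by
    simp [g, sum_sub_distrib, div_eq_mul_inv]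
  have hg : ∑ c, g c = 0 := by
    simp [g, sum_sub_distrib, hβ]
  have hg2 : ∑ c, g c ^ 2 = 1 - 1 / Fintype.card β := by
    simp only [g, sub_sq, ite_pow, one_pow, ne_eq, OfNat.ofNat_ne_zero, not_false_eq_true,
      zero_pow, sum_add_distrib, sum_sub_distrib, ← sum_mul, ← mul_sum, sum_ite_eq', mem_univ,
      ↓reduceIte, sum_const, card_univ, nsmul_eq_mul]
    field_simp
    ring
  simp_rw [hfiber, card_mul_sum_sq_sum_comp g hg, hg2]

theorem mean_fiberExcess_le_sqrt [Nonempty β] {s : ℕ}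
    (hs : Fintype.card α = Fintype.card β * s) :
    ((Fintype.card β : ℝ) ^ Fintype.card α)⁻¹ * ∑ F : α → β, (fiberExcess s F : ℝ)
      ≤ √(Fintype.card α * (Fintype.card β - 1)) := by
  have hβ : (Fintype.card β : ℝ) ≠ 0 := Nat.cast_ne_zero.2 Fintype.card_ne_zero
  have hs' : (s : ℝ) = Fintype.card α / Fintype.card β := by
    rw [eq_div_iff hβ, hs]; push_cast; ring
  set X : (α → β) × β → ℝ := fun p => (#{a | p.1 a = p.2} : ℝ) - Fintype.card α / Fintype.card β
  have hexcess (F : α → β) : (fiberExcess s F : ℝ) ≤ ∑ b, |X (F, b)| := by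
    unfold fiberExcess
    push_cast
    refine sum_le_sum fun b _ => ?_
    rcases le_total s #{a | F a = b} with h | h
    · rw [Nat.cast_sub h, hs']; exact le_abs_self _
    · rw [Nat.sub_eq_zero_of_le h, Nat.cast_zero]; exact abs_nonneg _
  have hvar : ∑ p, X p ^ 2
      = (Fintype.card β : ℝ) ^ Fintype.card α * (Fintype.card α * (1 - 1 / Fintype.card β)) := by
    rw [Fintype.sum_prod_type_right, ← mul_right_inj' hβ, mul_sum]
    simp only [X, card_mul_sum_sq_card_fiber_sub, sum_const, card_univ, nsmul_eq_mul]
  have hcs : (∑ F : α → β, (fiberExcess s F : ℝ)) ^ 2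
      ≤ ((Fintype.card β : ℝ) ^ Fintype.card α) ^ 2 * (Fintype.card α * (Fintype.card β - 1)) :=
    calc (∑ F : α → β, (fiberExcess s F : ℝ)) ^ 2
        ≤ (∑ p, |X p|) ^ 2 := by
          rw [Fintype.sum_prod_type]
          exact pow_le_pow_left₀ (sum_nonneg fun _ _ => Nat.cast_nonneg _)
            (sum_le_sum fun F _ => hexcess F) 2
      _ ≤ Fintype.card ((α → β) × β) * ∑ p, |X p| ^ 2 := sq_sum_le_card_mul_sum_sq
      _ = _ := by
          simp_rw [sq_abs, hvar, Fintype.card_prod, Fintype.card_fun]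
          push_cast
          field_simp
  refine Real.le_sqrt_of_sq_le ?_
  rwa [mul_pow, inv_pow, inv_mul_le_iff₀ (by positivity)]

theorem sum_permCoupling_mul_hammingDist_le_sqrt [Nonempty β] {s : ℕ}
    {d : α → β} (hd : ∀ b, #{a | d a = b} = s) :
    ∑ p : (α → β) × (α → β), permCoupling s d p * hammingDist p.1 p.2
      ≤ √(Fintype.card α * (Fintype.card β - 1)) :=
  (sum_permCoupling_mul_hammingDist_le s d hd).trans
    (mean_fiberExcess_le_sqrt (card_eq_mul_of_card_fiber_eq hd))

end Variance

theorem card_fiber_dmap {m n : ℕ} (hn : 0 < n) (hdvd : m ∣ n) (j : Fin m) :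
    #{x | dmap m n hn hdvd x = j} = n / m := by
  have hb : 0 < n / m := Nat.div_pos (Nat.le_of_dvd hn hdvd) (Nat.pos_of_dvd_of_pos hdvd hn)
  have hj : (j + 1) * (n / m) ≤ n :=
    calc (j + 1) * (n / m) ≤ m * (n / m) := Nat.mul_le_mul_right _ j.isLt
      _ = n := Nat.mul_div_cancel' hdvd
  simp only [dmap, Fin.ext_iff]
  conv_rhs => rw [← Fintype.card_fin (n / m), ← card_univ]
  refine card_bij' (fun x _ => ⟨x % (n / m), Nat.mod_lt _ hb⟩)
    (fun i _ => ⟨j * (n / m) + i, by nlinarith [i.isLt]⟩) (by simp) (fun i _ => ?_)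
    (fun x hx => ?_) (fun i _ => ?_)
  · simp only [mem_filter, mem_univ, true_and]
    rw [Nat.add_comm, Nat.add_mul_div_right _ _ hb, Nat.div_eq_of_lt i.isLt, zero_add]
  · simp only [mem_filter, mem_univ, true_and] at hx
    ext; simp only; rw [← hx, Nat.div_add_mod']
  · ext; simp [Nat.add_mod, Nat.mod_eq_of_lt i.isLt]

theorem stmt5_general (m n : ℕ) (hn : 1 ≤ n) (hdvd : m ∣ n) :
    ∃ w : (Fin n → Fin m) × (Fin n → Fin m) → ℝ,
      (∀ p, 0 ≤ w p) ∧
      (∑ p : (Fin n → Fin m) × (Fin n → Fin m), w p = 1) ∧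
      (∀ F : Fin n → Fin m, ∑ Ψ : Fin n → Fin m, w (F, Ψ) = ((m : ℝ) ^ n)⁻¹) ∧
      (∀ Ψ : Fin n → Fin m, ∑ F : Fin n → Fin m, w (F, Ψ) =
        ((Finset.univ.filter (fun g : Equiv.Perm (Fin n) =>
            (fun i => dmap m n hn hdvd (g i)) = Ψ)).card : ℝ) / (Nat.factorial n : ℝ)) ∧
      (∑ p : (Fin n → Fin m) × (Fin n → Fin m),
          w p * (((Finset.univ.filter (fun i : Fin n => p.1 i ≠ p.2 i)).card : ℝ) / (n : ℝ))
        ≤ Real.sqrt ((m : ℝ) ^ 2 * ((m : ℝ) - 1) / (n : ℝ))) := by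
  have hd := card_fiber_dmap hn hdvd
  have : NeZero m := ⟨(Nat.pos_of_dvd_of_pos hdvd hn).ne'⟩
  have hfst := sum_permCoupling_fst _ _ hd
  simp only [Fintype.card_fin] at hfst
  refine ⟨permCoupling (n / m) (dmap m n hn hdvd), permCoupling_nonneg _ _, ?_, hfst,
    by simpa using sum_permCoupling_snd _ _ hd, ?_⟩
  · simp [Fintype.sum_prod_type, hfst]
  have hD := sum_permCoupling_mul_hammingDist_le_sqrt hd
  simp only [Fintype.card_fin] at hD
  have hm : (1 : ℝ) ≤ m := by exact_mod_cast NeZero.one_le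
  have hn' : (0 : ℝ) < n := by exact_mod_cast hn
  simp only [mul_div_assoc', ← sum_div]
  calc _ ≤ √(n * (m - 1)) / n := div_le_div_of_nonneg_right hD hn'.le
    _ = √(n * (m - 1) / n ^ 2) := by
        rw [Real.sqrt_div' _ (by positivity), Real.sqrt_sq hn'.le]
    _ ≤ √(m ^ 2 * (m - 1) / n) := by
        refine Real.sqrt_le_sqrt ?_
        rw [div_le_div_iff₀ (by positivity) hn']
        nlinarith [mul_le_mul_of_nonneg_right (one_le_pow₀ hm : (1 : ℝ) ≤ m ^ 2)
          (by positivity : (0 : ℝ) ≤ (m - 1) * n ^ 2)]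

theorem stmt5 (m n : ℕ) (hm : 1 ≤ m) (hn : 1 ≤ n) (hdvd : m ∣ n) :
    ∃ w : (Fin n → Fin m) × (Fin n → Fin m) → ℝ,
      (∀ p, 0 ≤ w p) ∧
      (∑ p : (Fin n → Fin m) × (Fin n → Fin m), w p = 1) ∧
      (∀ F : Fin n → Fin m, ∑ Ψ : Fin n → Fin m, w (F, Ψ) = ((m : ℝ) ^ n)⁻¹) ∧
      (∀ Ψ : Fin n → Fin m, ∑ F : Fin n → Fin m, w (F, Ψ) =
        ((Finset.univ.filter (fun g : Equiv.Perm (Fin n) =>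
            (fun i => dmap m n hn hdvd (g i)) = Ψ)).card : ℝ) / (Nat.factorial n : ℝ)) ∧
      (∑ p : (Fin n → Fin m) × (Fin n → Fin m),
          w p * (((Finset.univ.filter (fun i : Fin n => p.1 i ≠ p.2 i)).card : ℝ) / (n : ℝ))
        ≤ Real.sqrt ((m : ℝ) ^ 2 * ((m : ℝ) - 1) / (n : ℝ))) :=
  stmt5_general m n hn hdvd
end

section
/- Let n, m ≥ 1 be integers, let f, h : Fin n → Fin m be maps, and let x : Fin n → ℝ. Then: (i) ‖T_f x‖₁ ≤ ‖x‖₁; and (ii) (1/n!) · ∑_{g ∈ Perm(Fin n)} ‖T_f (x ∘ g) − T_h (x ∘ g)‖₁ ≤ 2 · (#{j ∈ Fin n : f(j) ≠ h(j)} / n) · ‖x‖₁. In particular min over permutations g of ‖T_f(x∘g) − T_h(x∘g)‖₁ is bounded by the same quantity. -/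
/-!
Binning is an ℓ¹-contraction, and `T_f y - T_h y` only sees the coordinates on which `f` and `h`
disagree, so `‖T_f y - T_h y‖₁ ≤ 2 ∑_{f j ≠ h j} |y j|`. Averaged over all permutations `g`, each
coordinate `x (g j)` is uniformly distributed over the entries of `x`, so the right-hand side for
`y = x ∘ g` averages to `2 · #{f ≠ h} / n · ‖x‖₁`; some permutation does at least as well as
the average.
-/

/-- The binning operator: `(T_f x)(i) = ∑_{j : f j = i} x j`. -/
noncomputable def binOp {n m : ℕ} (f : Fin n → Fin m) (x : Fin n → ℝ) : Fin m → ℝ :=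
  fun i => ∑ j ∈ Finset.univ.filter (fun j => f j = i), x j

open Finset
open scoped Nat

section Binning

variable {n m : ℕ}

lemma binOp_eq_sum_ite (f : Fin n → Fin m) (y : Fin n → ℝ) (i : Fin m) :
    binOp f y i = ∑ j, if f j = i then y j else 0 :=
  sum_filter _ _

lemma sum_abs_binOp_le (f : Fin n → Fin m) (y : Fin n → ℝ) :
    ∑ i, |binOp f y i| ≤ ∑ j, |y j| :=
  calc ∑ i, |binOp f y i|
      ≤ ∑ i, ∑ j ∈ univ.filter (fun j => f j = i), |y j| :=
        sum_le_sum fun _ _ => abs_sum_le_sum_abs _ _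
    _ = ∑ j, |y j| := sum_fiberwise _ _ _

lemma binOp_sub_binOp_eq (f h : Fin n → Fin m) (y : Fin n → ℝ) (i : Fin m) :
    binOp f y i - binOp h y i =
      binOp f (fun j => if f j = h j then 0 else y j) i -
        binOp h (fun j => if f j = h j then 0 else y j) i := by
  simp only [binOp_eq_sum_ite, ← sum_sub_distrib]
  refine sum_congr rfl fun j _ => ?_
  by_cases hj : f j = h j <;> simp [hj]

lemma sum_abs_binOp_sub_le (f h : Fin n → Fin m) (y : Fin n → ℝ) :
    ∑ i, |binOp f y i - binOp h y i| ≤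
      2 * ∑ j ∈ univ.filter (fun j => f j ≠ h j), |y j| := by
  set z : Fin n → ℝ := fun j => if f j = h j then 0 else y j
  have hz : ∑ j, |z j| = ∑ j ∈ univ.filter (fun j => f j ≠ h j), |y j| := by
    rw [sum_filter]
    exact sum_congr rfl fun j _ => by by_cases hj : f j = h j <;> simp [z, hj]
  calc ∑ i, |binOp f y i - binOp h y i|
      = ∑ i, |binOp f z i - binOp h z i| := by simp only [binOp_sub_binOp_eq f h y]; rfl
    _ ≤ ∑ i, (|binOp f z i| + |binOp h z i|) := sum_le_sum fun _ _ => abs_sub _ _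
    _ ≤ ∑ j, |z j| + ∑ j, |z j| := by
        rw [sum_add_distrib]
        exact add_le_add (sum_abs_binOp_le f z) (sum_abs_binOp_le h z)
    _ = 2 * ∑ j ∈ univ.filter (fun j => f j ≠ h j), |y j| := by rw [hz]; ring

end Binning

section PermAverage

variable {α M R : Type*} [Fintype α] [DecidableEq α]

lemma sum_perm_apply_eq [AddCommMonoid M] (F : α → M) (a b : α) :
    ∑ g : Equiv.Perm α, F (g a) = ∑ g : Equiv.Perm α, F (g b) := by
  rw [← Equiv.sum_comp (Equiv.mulRight (Equiv.swap b a))]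
  simp

lemma card_nsmul_sum_perm_apply [AddCommMonoid M] (F : α → M) (a : α) :
    Fintype.card α • ∑ g : Equiv.Perm α, F (g a) = (Fintype.card α)! • ∑ k, F k := by
  calc Fintype.card α • ∑ g : Equiv.Perm α, F (g a)
      = ∑ k : α, ∑ g : Equiv.Perm α, F (g k) := by
        rw [← card_univ, ← sum_const]
        exact sum_congr rfl fun k _ => sum_perm_apply_eq F a k
    _ = ∑ g : Equiv.Perm α, ∑ k, F k := by
        rw [sum_comm]
        exact sum_congr rfl fun g _ => Equiv.sum_comp g F
    _ = (Fintype.card α)! • ∑ k, F k := by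
        rw [sum_const, card_univ, Fintype.card_perm]

lemma inv_factorial_mul_sum_perm_apply [Semifield R] [CharZero R] (F : α → R) (a : α) :
    ((Fintype.card α)! : R)⁻¹ * ∑ g : Equiv.Perm α, F (g a) =
      (Fintype.card α : R)⁻¹ * ∑ k, F k := by
  have : Nonempty α := ⟨a⟩
  have key := card_nsmul_sum_perm_apply F a
  simp only [nsmul_eq_mul] at key
  field_simp
  rw [div_eq_iff (Nat.cast_ne_zero.2 (Nat.factorial_ne_zero _)), mul_comm, key, mul_comm]

end PermAverage

lemma exists_le_of_inv_card_mul_sum_le {ι : Type*} [Fintype ι] [Nonempty ι] {F : ι → ℝ} {B : ℝ}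
    (h : (Fintype.card ι : ℝ)⁻¹ * ∑ i, F i ≤ B) : ∃ i, F i ≤ B := by
  have total : ∑ i, F i ≤ ∑ _i : ι, B := by
    rwa [sum_const, card_univ, nsmul_eq_mul, ← inv_mul_le_iff₀ (by positivity)]
  obtain ⟨i, -, hi⟩ := exists_le_of_sum_le univ_nonempty total
  exact ⟨i, hi⟩

theorem stmt6_general (n m : ℕ) (f h : Fin n → Fin m) (x : Fin n → ℝ) :
    (∑ i, |binOp f x i| ≤ ∑ j, |x j|) ∧
    ((Nat.factorial n : ℝ)⁻¹ *
        ∑ g : Equiv.Perm (Fin n),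
          ∑ i, |binOp f (fun j => x (g j)) i - binOp h (fun j => x (g j)) i|
      ≤ 2 * (((Finset.univ.filter (fun j : Fin n => f j ≠ h j)).card : ℝ) / (n : ℝ)) *
          ∑ j, |x j|) ∧
    (∃ g : Equiv.Perm (Fin n),
      ∑ i, |binOp f (fun j => x (g j)) i - binOp h (fun j => x (g j)) i|
        ≤ 2 * (((Finset.univ.filter (fun j : Fin n => f j ≠ h j)).card : ℝ) / (n : ℝ)) *
            ∑ j, |x j|) := by
  set D := univ.filter (fun j : Fin n => f j ≠ h j)
  set B := 2 * ((#D : ℝ) / n) * ∑ j, |x j|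
  have average : (n ! : ℝ)⁻¹ * ∑ g : Equiv.Perm (Fin n),
      ∑ i, |binOp f (fun j => x (g j)) i - binOp h (fun j => x (g j)) i| ≤ B :=
    calc (n ! : ℝ)⁻¹ * ∑ g : Equiv.Perm (Fin n),
          ∑ i, |binOp f (fun j => x (g j)) i - binOp h (fun j => x (g j)) i|
        ≤ (n ! : ℝ)⁻¹ * ∑ g : Equiv.Perm (Fin n), 2 * ∑ j ∈ D, |x (g j)| := by
          gcongr with g
          exact sum_abs_binOp_sub_le f h _
      _ = 2 * ∑ j ∈ D, (n ! : ℝ)⁻¹ * ∑ g : Equiv.Perm (Fin n), |x (g j)| := by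
          rw [← mul_sum, mul_left_comm, sum_comm, mul_sum]
      _ = B := by
          have hperm := inv_factorial_mul_sum_perm_apply (fun k => |x k|)
          simp only [Fintype.card_fin] at hperm
          simp only [hperm, sum_const, nsmul_eq_mul, B]
          ring
  refine ⟨sum_abs_binOp_le f x, average, ?_⟩
  apply exists_le_of_inv_card_mul_sum_le
  rwa [Fintype.card_perm, Fintype.card_fin]

theorem stmt6 (n m : ℕ) (hn : 1 ≤ n) (hm : 1 ≤ m) (f h : Fin n → Fin m) (x : Fin n → ℝ) :
    (∑ i, |binOp f x i| ≤ ∑ j, |x j|) ∧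
    ((Nat.factorial n : ℝ)⁻¹ *
        ∑ g : Equiv.Perm (Fin n),
          ∑ i, |binOp f (fun j => x (g j)) i - binOp h (fun j => x (g j)) i|
      ≤ 2 * (((Finset.univ.filter (fun j : Fin n => f j ≠ h j)).card : ℝ) / (n : ℝ)) *
          ∑ j, |x j|) ∧
    (∃ g : Equiv.Perm (Fin n),
      ∑ i, |binOp f (fun j => x (g j)) i - binOp h (fun j => x (g j)) i|
        ≤ 2 * (((Finset.univ.filter (fun j : Fin n => f j ≠ h j)).card : ℝ) / (n : ℝ)) *
            ∑ j, |x j|) :=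
  stmt6_general n m f h x
end

section
/- Fix integers d, n, m ≥ 1 and maps f, h : Fin n → Fin m. For an array X : (Fin d → Fin n) → ℝ define the binning operator T_f^{(d)} X : (Fin d → Fin m) → ℝ by (T_f^{(d)} X)(a) = ∑_{j : Fin d → Fin n with f ∘ j = a} X(j), and for a permutation g of Fin n define (g·X)(j) = X(g ∘ j). With ‖·‖₁ the sum of the absolute values of all entries of an array, the following hold: (i) ‖T_f^{(d)} X‖₁ ≤ ‖X‖₁; and (ii) (1/n!) · ∑_{g ∈ Perm(Fin n)} ‖T_f^{(d)}(g·X) − T_h^{(d)}(g·X)‖₁ ≤ 2d · (#{j ∈ Fin n : f(j) ≠ h(j)} / n) · ‖X‖₁. -/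
/-!
Binning is a pushforward along `j ↦ f ∘ j`, so it cannot increase the ℓ1 norm, and the binnings
along `f` and `h` differ only through the entries `X j` with `f ∘ j ≠ h ∘ j`, each of which
contributes at most `2 |X j|`. Such a `j` has some coordinate in the disagreement set of `f` and
`h`; after relabelling by a uniformly random permutation each coordinate lands there with
probability `#{f ≠ h} / n`, and a union bound over the `d` coordinates gives the factor `2d`.
-/

/-- The `d`-fold binning operator on arrays:
`(T_f^{(d)} X)(a) = ∑_{j : f ∘ j = a} X j`. -/
noncomputable def binOpD {d n m : ℕ} (f : Fin n → Fin m)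
    (X : (Fin d → Fin n) → ℝ) : (Fin d → Fin m) → ℝ :=
  fun a => ∑ j ∈ Finset.univ.filter (fun j : Fin d → Fin n => f ∘ j = a), X j

open Finset Nat

section Fibers

variable {ι κ : Type*} [Fintype ι] [Fintype κ] [DecidableEq κ]

theorem sum_abs_sum_fiber_le (u : ι → κ) (X : ι → ℝ) :
    ∑ a, |∑ j with u j = a, X j| ≤ ∑ j, |X j| :=
  calc ∑ a, |∑ j with u j = a, X j|
      ≤ ∑ a, ∑ j with u j = a, |X j| := sum_le_sum fun _ _ => abs_sum_le_sum_abs _ _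
    _ = ∑ j, |X j| := sum_fiberwise _ _ _

theorem sum_abs_ite_sub_ite (x : ℝ) (b c : κ) :
    ∑ a, |(if b = a then x else 0) - (if c = a then x else 0)| = if b = c then 0 else 2 * |x| := by
  by_cases hbc : b = c
  · simp [hbc]
  · rw [if_neg hbc, Fintype.sum_eq_add b c hbc]
    · simp [hbc, Ne.symm hbc, two_mul]
    · rintro a ⟨hab, hac⟩
      simp [Ne.symm hab, Ne.symm hac]

theorem sum_abs_sum_fiber_sub_le (u v : ι → κ) (X : ι → ℝ) :
    ∑ a, |∑ j with u j = a, X j - ∑ j with v j = a, X j| ≤ 2 * ∑ j with u j ≠ v j, |X j| :=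
  calc ∑ a, |∑ j with u j = a, X j - ∑ j with v j = a, X j|
      = ∑ a, |∑ j, ((if u j = a then X j else 0) - (if v j = a then X j else 0))| := by
        simp only [sum_sub_distrib, sum_ite, sum_const_zero, add_zero]
    _ ≤ ∑ a, ∑ j, |(if u j = a then X j else 0) - (if v j = a then X j else 0)| :=
        sum_le_sum fun _ _ => abs_sum_le_sum_abs _ _
    _ = ∑ j, if u j = v j then 0 else 2 * |X j| := by
        rw [sum_comm]; simp only [sum_abs_ite_sub_ite]
    _ = 2 * ∑ j with u j ≠ v j, |X j| := by
        rw [sum_ite, sum_const_zero, zero_add, mul_sum]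

end Fibers

theorem sum_abs_filter_comp_ne_le {ι β γ : Type*} [Fintype ι] [DecidableEq ι] [Fintype β]
    [DecidableEq γ] (u v : β → γ) (Y : (ι → β) → ℝ) :
    ∑ j with u ∘ j ≠ v ∘ j, |Y j| ≤ ∑ j, (#{t | u (j t) ≠ v (j t)} : ℝ) * |Y j| := by
  rw [sum_filter]
  refine sum_le_sum fun j _ => ?_
  split_ifs with hj
  · obtain ⟨t, ht⟩ := Function.ne_iff.mp hj
    have h_one_le : (1 : ℝ) ≤ #{t | u (j t) ≠ v (j t)} := by
      exact_mod_cast card_pos.mpr ⟨t, mem_filter.mpr ⟨mem_univ t, ht⟩⟩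
    nlinarith [abs_nonneg (Y j)]
  · positivity

theorem inv_factorial_mul_sum_perm_symm_apply {α : Type*} [Fintype α] [DecidableEq α]
    (c : α → ℝ) (v : α) :
    ((Fintype.card α)! : ℝ)⁻¹ * ∑ g : Equiv.Perm α, c (g.symm v)
      = (∑ w, c w) / Fintype.card α := by
  have h_indep : ∀ w, ∑ g : Equiv.Perm α, c (g.symm w) = ∑ g : Equiv.Perm α, c (g.symm v) :=
    fun w => Fintype.sum_equiv (Equiv.mulLeft (Equiv.swap w v)) _ _ fun g => by
      simp [Equiv.Perm.mul_def]
  have h_total : ∑ w, ∑ g : Equiv.Perm α, c (g.symm w) = (Fintype.card α)! * ∑ w, c w := by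
    rw [sum_comm, sum_congr rfl fun g _ => Equiv.sum_comp g.symm c]
    simp [Fintype.card_perm]
  simp only [h_indep, sum_const, Finset.card_univ, nsmul_eq_mul] at h_total
  have hα : (Fintype.card α : ℝ) ≠ 0 := by exact_mod_cast (Fintype.card_pos_iff.mpr ⟨v⟩).ne'
  field_simp
  linear_combination h_total

theorem binOpD_comp_perm {d n m : ℕ} (f : Fin n → Fin m) (X : (Fin d → Fin n) → ℝ)
    (g : Equiv.Perm (Fin n)) :
    binOpD f (fun j => X (g ∘ j)) = binOpD (f ∘ g.symm) X := by
  funext a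
  simp only [binOpD, sum_filter]
  exact Fintype.sum_equiv (Equiv.piCongrRight fun _ => g) _ _ fun j => by
    simp [Function.comp_def]; rfl

theorem sum_abs_binOpD_sub_le {d n m : ℕ} (f h : Fin n → Fin m) (X : (Fin d → Fin n) → ℝ) :
    ∑ a, |binOpD f X a - binOpD h X a| ≤ 2 * ∑ j, (#{t | f (j t) ≠ h (j t)} : ℝ) * |X j| :=
  (sum_abs_sum_fiber_sub_le _ _ X).trans
    (mul_le_mul_of_nonneg_left (sum_abs_filter_comp_ne_le _ _ X) zero_le_two)

theorem stmt7_general (d n m : ℕ)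
    (f h : Fin n → Fin m) (X : (Fin d → Fin n) → ℝ) :
    (∑ a : Fin d → Fin m, |binOpD f X a| ≤ ∑ j : Fin d → Fin n, |X j|) ∧
    ((Nat.factorial n : ℝ)⁻¹ *
        ∑ g : Equiv.Perm (Fin n),
          ∑ a : Fin d → Fin m,
            |binOpD f (fun j => X (⇑g ∘ j)) a - binOpD h (fun j => X (⇑g ∘ j)) a|
      ≤ 2 * (d : ℝ) *
          (((Finset.univ.filter (fun j : Fin n => f j ≠ h j)).card : ℝ) / (n : ℝ)) *
          ∑ j : Fin d → Fin n, |X j|) := by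
  refine ⟨sum_abs_sum_fiber_le (f ∘ ·) X, ?_⟩
  have h_avg : ∀ v, (n ! : ℝ)⁻¹ * ∑ g : Equiv.Perm (Fin n),
      (if f (g.symm v) ≠ h (g.symm v) then 1 else 0 : ℝ) = #{w | f w ≠ h w} / n := fun v => by
    simpa [natCast_card_filter] using
      inv_factorial_mul_sum_perm_symm_apply (fun w => if f w ≠ h w then (1 : ℝ) else 0) v
  calc (n ! : ℝ)⁻¹ * ∑ g : Equiv.Perm (Fin n), ∑ a,
        |binOpD f (fun j => X (g ∘ j)) a - binOpD h (fun j => X (g ∘ j)) a|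
      ≤ (n ! : ℝ)⁻¹ * ∑ g : Equiv.Perm (Fin n),
          2 * ∑ j, (#{t | f (g.symm (j t)) ≠ h (g.symm (j t))} : ℝ) * |X j| := by
        gcongr with g
        rw [binOpD_comp_perm, binOpD_comp_perm]
        exact sum_abs_binOpD_sub_le _ _ X
    _ = 2 * ∑ j, (∑ t, (n ! : ℝ)⁻¹ * ∑ g : Equiv.Perm (Fin n),
          (if f (g.symm (j t)) ≠ h (g.symm (j t)) then 1 else 0 : ℝ)) * |X j| := by
        simp only [natCast_card_filter, mul_sum, sum_mul]
        rw [sum_comm]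
        refine sum_congr rfl fun j _ => ?_
        rw [sum_comm]
        exact sum_congr rfl fun t _ => sum_congr rfl fun g _ => by ring
    _ = 2 * d * (#{w | f w ≠ h w} / n) * ∑ j, |X j| := by
        simp only [h_avg, sum_const, Finset.card_univ, Fintype.card_fin, nsmul_eq_mul, ← mul_sum]
        ring

theorem stmt7 (d n m : ℕ) (hd : 1 ≤ d) (hn : 1 ≤ n) (hm : 1 ≤ m)
    (f h : Fin n → Fin m) (X : (Fin d → Fin n) → ℝ) :
    (∑ a : Fin d → Fin m, |binOpD f X a| ≤ ∑ j : Fin d → Fin n, |X j|) ∧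
    ((Nat.factorial n : ℝ)⁻¹ *
        ∑ g : Equiv.Perm (Fin n),
          ∑ a : Fin d → Fin m,
            |binOpD f (fun j => X (⇑g ∘ j)) a - binOpD h (fun j => X (⇑g ∘ j)) a|
      ≤ 2 * (d : ℝ) *
          (((Finset.univ.filter (fun j : Fin n => f j ≠ h j)).card : ℝ) / (n : ℝ)) *
          ∑ j : Fin d → Fin n, |X j|) :=
  stmt7_general d n m f h X
end

section
/- Let E be a measurable space, let n ≥ 1, and let μ be any probability measure on (Fin n → E). For each integer m ≥ 1 define ν_m = n^(−m) · ∑_{f : Fin m → Fin n} (pushforward of μ under x ↦ x ∘ f). Then for all 1 ≤ m ≤ m', the pushforward of ν_{m'} under z ↦ z ∘ ι, where ι : Fin m → Fin m' is the canonical inclusion, equals ν_m. Moreover each ν_m is exchangeable, i.e. invariant under pushforward by z ↦ z ∘ σ for every permutation σ of Fin m. -/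
/-! Dropping the last coordinate, `f ↦ f ∘ Fin.castSucc : (Fin (m + 1) → Fin n) → (Fin m → Fin n)`,
is `n`-to-one, and the extra factor `n⁻¹` in the normalisation of `ν_{m+1}`
absorbs exactly this multiplicity; induction on `m'` gives consistency. Precomposition with a
permutation only reindexes the sum defining `ν_m`. -/

open MeasureTheory
open scoped ENNReal

/-- The law of `m` entries of a `μ`-random vector sampled with replacement:
`ν_m = n^{-m} • ∑_{f : Fin m → Fin n} (x ↦ x ∘ f)_* μ`. -/
noncomputable def sampledLaw {E : Type*} [MeasurableSpace E] (n : ℕ)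
    (μ : Measure (Fin n → E)) (m : ℕ) : Measure (Fin m → E) :=
  ((n : ℝ≥0∞) ^ m)⁻¹ • ∑ f : Fin m → Fin n, μ.map (fun x => x ∘ f)

theorem Fintype.sum_comp_castSucc {α M : Type*} [Fintype α] [AddCommMonoid M]
    {m : ℕ} (F : (Fin m → α) → M) :
    ∑ f : Fin (m + 1) → α, F (f ∘ Fin.castSucc) = Fintype.card α • ∑ g, F g := by
  rw [← (Fin.snocEquiv fun _ => α).sum_comp, Fintype.sum_prod_type]
  simp [Fin.snocEquiv, Fin.snoc_comp_castSucc]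

section

variable {E : Type*} [MeasurableSpace E] {n : ℕ} (μ : Measure (Fin n → E))

theorem sampledLaw_map_comp_right {m k : ℕ} (g : Fin k → Fin m) :
    (sampledLaw n μ m).map (· ∘ g) =
      ((n : ℝ≥0∞) ^ m)⁻¹ • ∑ f : Fin m → Fin n, μ.map (· ∘ (f ∘ g)) := by
  rw [sampledLaw, Measure.map_smul,
    Measure.map_finset_sum' (by fun_prop : Measurable _).aemeasurable]
  congr 2 with f
  rw [Measure.map_map (by fun_prop) (by fun_prop)]
  rfl

theorem sampledLaw_map_castSucc (hn : n ≠ 0) (m : ℕ) :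
    (sampledLaw n μ (m + 1)).map (· ∘ Fin.castSucc) = sampledLaw n μ m := by
  have hn' : (n : ℝ≥0∞) ≠ 0 := Nat.cast_ne_zero.mpr hn
  have hn_top : (n : ℝ≥0∞) ≠ ∞ := ENNReal.natCast_ne_top n
  rw [sampledLaw_map_comp_right, Fintype.sum_comp_castSucc (fun g => μ.map (· ∘ g)),
    Fintype.card_fin, ← Nat.cast_smul_eq_nsmul ℝ≥0∞, smul_smul, pow_succ,
    ENNReal.mul_inv (.inl (pow_ne_zero _ hn')) (.inl (ENNReal.pow_ne_top hn_top)),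
    mul_assoc, ENNReal.inv_mul_cancel hn' hn_top, mul_one, sampledLaw]

theorem sampledLaw_map_castLE (hn : n ≠ 0) {m m' : ℕ} (h : m ≤ m') :
    (sampledLaw n μ m').map (· ∘ Fin.castLE h) = sampledLaw n μ m := by
  induction m', h using Nat.le_induction with
  | base => simp
  | succ m' h ih =>
    rw [← ih, ← sampledLaw_map_castSucc μ hn m', Measure.map_map (by fun_prop) (by fun_prop)]
    rfl

theorem sampledLaw_map_perm {m : ℕ} (σ : Equiv.Perm (Fin m)) :
    (sampledLaw n μ m).map (· ∘ σ) = sampledLaw n μ m := by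
  rw [sampledLaw_map_comp_right, sampledLaw]
  congr 1
  exact (σ.arrowCongr (Equiv.refl (Fin n))).symm.sum_comp fun f => μ.map (· ∘ f)

end

theorem stmt9_general {E : Type*} [MeasurableSpace E] (n : ℕ) (hn : 1 ≤ n)
    (μ : Measure (Fin n → E)) :
    (∀ (m m' : ℕ) (hm : 1 ≤ m) (hmm : m ≤ m'),
      (sampledLaw n μ m').map (fun z => z ∘ Fin.castLE hmm) = sampledLaw n μ m) ∧
    (∀ (m : ℕ) (σ : Equiv.Perm (Fin m)),
      (sampledLaw n μ m).map (fun z => z ∘ ⇑σ) = sampledLaw n μ m) :=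
  ⟨fun _ _ _ hmm => sampledLaw_map_castLE μ (Nat.one_le_iff_ne_zero.mp hn) hmm,
    fun _ σ => sampledLaw_map_perm μ σ⟩

theorem stmt9 {E : Type*} [MeasurableSpace E] (n : ℕ) (hn : 1 ≤ n)
    (μ : Measure (Fin n → E)) [IsProbabilityMeasure μ] :
    (∀ (m m' : ℕ) (hm : 1 ≤ m) (hmm : m ≤ m'),
      (sampledLaw n μ m').map (fun z => z ∘ Fin.castLE hmm) = sampledLaw n μ m) ∧
    (∀ (m : ℕ) (σ : Equiv.Perm (Fin m)),
      (sampledLaw n μ m).map (fun z => z ∘ ⇑σ) = sampledLaw n μ m) :=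
  stmt9_general n hn μ
end

section
/- Let E be a type, let 1 ≤ k ≤ n and N ≥ 1 be integers, let q : (Fin k → E) → ℝ, and let y : Fin N → E. Then there exists a map f : Fin n → Fin N such that sym_n q (y ∘ f) ≤ N^(−k) · ∑_{h : Fin k → Fin N} q(y ∘ h). -/
/-!
Averaging `symN k n q (y ∘ f)` over all `N ^ n` maps `f : Fin n → Fin N` gives exactly
`N ^ (-k) ∑_h q (y ∘ h)`: for each fixed injective `φ`, the map `f ↦ f ∘ φ` hits every
`h : Fin k → Fin N` exactly `N ^ (n - k)` times, and there are `n! / (n - k)!` such `φ`.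
Some `f` is at most the average.
-/

open Finset Function

/-- The symmetrization `sym_n q (x) = ((n−k)!/n!) ∑_{φ : Fin k ↪ Fin n} q (x ∘ φ)`. -/
noncomputable def symN {E : Type*} (k n : ℕ) (q : (Fin k → E) → ℝ) (x : Fin n → E) : ℝ :=
  (Nat.factorial (n - k) : ℝ) / (Nat.factorial n : ℝ) *
    ∑ φ ∈ Finset.univ.filter (fun φ : Fin k → Fin n => Function.Injective φ), q (x ∘ φ)

namespace Fintype

theorem sum_comp_sumInl {ι β α M : Type*} [Fintype ι] [Fintype β] [Fintype α]
    [DecidableEq ι] [DecidableEq β] [AddCommMonoid M] (g : (ι → α) → M) :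
    ∑ f : ι ⊕ β → α, g (f ∘ Sum.inl) = card α ^ card β • ∑ h, g h := by
  rw [← (Equiv.sumArrowEquivProdArrow ι β α).symm.sum_comp, sum_prod_type_right]
  have hinl (x : ι → α) (y : β → α) :
      (Equiv.sumArrowEquivProdArrow ι β α).symm (x, y) ∘ Sum.inl = x := rfl
  simp only [hinl, sum_const, card_univ, card_fun]

theorem sum_comp_of_injective {ι κ α M : Type*} [Fintype ι] [Fintype κ] [Fintype α]
    [DecidableEq ι] [DecidableEq κ] [AddCommMonoid M] {φ : ι → κ} (hφ : Injective φ)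
    (g : (ι → α) → M) :
    ∑ f : κ → α, g (f ∘ φ) = card α ^ (card κ - card ι) • ∑ h, g h := by
  let e : ι ⊕ ↥(Set.range φ)ᶜ ≃ κ :=
    ((Equiv.ofInjective φ hφ).sumCongr (Equiv.refl _)).trans (Equiv.Set.sumCompl _)
  have hcard : card ↥(Set.range φ)ᶜ = card κ - card ι := by
    rw [card_compl_set, Set.card_range_of_injective hφ]
  rw [← hcard, ← sum_comp_sumInl, ← (e.arrowCongr (Equiv.refl α)).symm.sum_comp]
  rfl

theorem card_filter_injective {α β : Type*} [Fintype α] [Fintype β] [DecidableEq α]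
    [DecidableEq β] :
    #(univ.filter fun φ : α → β => Injective φ) = (card β).descFactorial (card α) := by
  rw [← card_subtype, card_congr (Equiv.subtypeInjectiveEquivEmbedding α β),
    card_embedding_eq]

end Fintype

theorem symN_eq_inv_descFactorial_mul {E : Type*} {k n : ℕ} (hkn : k ≤ n)
    (q : (Fin k → E) → ℝ) (x : Fin n → E) :
    symN k n q x = ((n.descFactorial k : ℕ) : ℝ)⁻¹ *
      ∑ φ ∈ univ.filter (fun φ : Fin k → Fin n => Injective φ), q (x ∘ φ) := by
  rw [symN, ← Nat.factorial_mul_descFactorial hkn, Nat.cast_mul,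
    div_mul_cancel_left₀ (by positivity)]

theorem sum_symN {α : Type*} [Fintype α] {k n : ℕ} (hkn : k ≤ n)
    (q : (Fin k → α) → ℝ) :
    ∑ f : Fin n → α, symN k n q f = (Fintype.card α : ℝ) ^ (n - k) * ∑ h, q h := by
  have hdesc : ((n.descFactorial k : ℕ) : ℝ) ≠ 0 :=
    Nat.cast_ne_zero.mpr <| Nat.descFactorial_eq_zero_iff_lt.not.mpr <| by omega
  have hφ : ∀ φ ∈ univ.filter (fun φ : Fin k → Fin n => Injective φ),
      ∑ f : Fin n → α, q (f ∘ φ) = (Fintype.card α : ℝ) ^ (n - k) * ∑ h, q h := by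
    intro φ hφ
    rw [Fintype.sum_comp_of_injective (mem_filter.mp hφ).2, nsmul_eq_mul, Fintype.card_fin,
      Fintype.card_fin, Nat.cast_pow]
  simp_rw [symN_eq_inv_descFactorial_mul hkn, ← mul_sum]
  rw [sum_comm, sum_congr rfl hφ, sum_const, Fintype.card_filter_injective, Fintype.card_fin,
    Fintype.card_fin, nsmul_eq_mul, inv_mul_cancel_left₀ hdesc]

theorem stmt10_general {E : Type*} (k n N : ℕ) (hkn : k ≤ n) (hN : 1 ≤ N)
    (q : (Fin k → E) → ℝ) (y : Fin N → E) :
    ∃ f : Fin n → Fin N,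
      symN k n q (y ∘ f) ≤ ((N : ℝ) ^ k)⁻¹ * ∑ h : Fin k → Fin N, q (y ∘ h) := by
  have : NeZero N := ⟨by omega⟩
  have hN₀ : (N : ℝ) ≠ 0 := by positivity
  have hsum : ∑ f : Fin n → Fin N, symN k n q (y ∘ f)
      = ∑ _f : Fin n → Fin N, ((N : ℝ) ^ k)⁻¹ * ∑ h : Fin k → Fin N, q (y ∘ h) := by
    change ∑ f, symN k n (fun h => q (y ∘ h)) f = _
    rw [sum_symN hkn, sum_const, card_univ, Fintype.card_fun,
      Fintype.card_fin, Fintype.card_fin, nsmul_eq_mul, Nat.cast_pow, pow_sub₀ _ hN₀ hkn,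
      mul_assoc]
  obtain ⟨f, -, hf⟩ := exists_le_of_sum_le univ_nonempty hsum.le
  exact ⟨f, hf⟩

theorem stmt10 {E : Type*} (k n N : ℕ) (hk : 1 ≤ k) (hkn : k ≤ n) (hN : 1 ≤ N)
    (q : (Fin k → E) → ℝ) (y : Fin N → E) :
    ∃ f : Fin n → Fin N,
      symN k n q (y ∘ f) ≤ ((N : ℝ) ^ k)⁻¹ * ∑ h : Fin k → Fin N, q (y ∘ h) :=
  stmt10_general k n N hkn hN q y
end

section
/- Let E be a type, let 1 ≤ k ≤ n be integers, let q : (Fin k → E) → ℝ, and let x : Fin (n+1) → E. Then there exists an injective map g : Fin n → Fin (n+1) such that sym_n q (x ∘ g) ≤ sym_{n+1} q (x). Consequently, for any set Θ ⊆ E, the optimal values ℓ_n = inf_{x : Fin n → Θ} sym_n q(x) are nondecreasing in n for n ≥ k. -/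
/-! Each of the `(n + 1)!/(n + 1 - k)!` injections `Fin k → Fin (n + 1)` factors as
`m.succAbove ∘ ψ` with `ψ : Fin k → Fin n` injective in exactly `n + 1 - k` ways, one for each `m`
outside its range. Hence `sym_{n+1} q (x)` is the mean over `m` of `sym_n q (x ∘ m.succAbove)`,
and some term of a mean is at most the mean. -/

open Finset Function

theorem card_filter_forall_ne_of_injective {k n : ℕ} {φ : Fin k → Fin n} (hφ : Injective φ) :
    #{m | ∀ i, φ i ≠ m} = n - k := by
  have : ({m | ∀ i, φ i ≠ m} : Finset (Fin n)) = (univ.image φ)ᶜ := by ext; simp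
  rw [this, card_compl, card_image_of_injective _ hφ, Fintype.card_fin, card_univ, Fintype.card_fin]

theorem sum_injective_succAbove_comp {M : Type*} [AddCommMonoid M] {k n : ℕ} (m : Fin (n + 1))
    (f : (Fin k → Fin (n + 1)) → M) :
    ∑ ψ : Fin k → Fin n with Injective ψ, f (m.succAbove ∘ ψ) =
      ∑ φ : Fin k → Fin (n + 1) with Injective φ ∧ ∀ i, φ i ≠ m, f φ := by
  rw [← sum_image (f := f) fun _ _ _ _ h => Fin.succAbove_right_injective.comp_left h]
  congr 1
  ext φ
  simp only [mem_image, mem_filter, mem_univ, true_and]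
  constructor
  · rintro ⟨ψ, hψ, rfl⟩
    exact ⟨Fin.succAbove_right_injective.comp hψ, fun i => Fin.succAbove_ne m (ψ i)⟩
  · rintro ⟨hφ, hm⟩
    choose ψ hψ using fun i => Fin.exists_succAbove_eq (hm i)
    refine ⟨ψ, fun a b hab => hφ ?_, funext hψ⟩
    rw [← hψ a, ← hψ b, hab]

theorem sum_sum_injective_succAbove_comp {M : Type*} [AddCommMonoid M] {k n : ℕ}
    (f : (Fin k → Fin (n + 1)) → M) :
    ∑ m : Fin (n + 1), ∑ ψ : Fin k → Fin n with Injective ψ, f (m.succAbove ∘ ψ) =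
      (n + 1 - k) • ∑ φ : Fin k → Fin (n + 1) with Injective φ, f φ := by
  simp_rw [sum_injective_succAbove_comp, smul_sum]
  rw [sum_comm' (t' := {φ | Injective φ}) (s' := fun φ => {m | ∀ i, φ i ≠ m})
    (by intros; simp only [mem_filter, mem_univ, true_and]; tauto)]
  refine sum_congr rfl fun φ hφ => ?_
  rw [sum_const, card_filter_forall_ne_of_injective (mem_filter.1 hφ).2]

theorem sum_symN_comp_succAbove {E : Type*} {k n : ℕ} (hkn : k ≤ n)
    (q : (Fin k → E) → ℝ) (x : Fin (n + 1) → E) :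
    ∑ m : Fin (n + 1), symN k n q (x ∘ m.succAbove) = (n + 1) * symN k (n + 1) q x := by
  have hsum := sum_sum_injective_succAbove_comp (k := k) (n := n) fun φ => q (x ∘ φ)
  simp only [symN, ← mul_sum, comp_assoc, hsum, nsmul_eq_mul]
  rw [Nat.sub_add_comm hkn, Nat.factorial_succ, Nat.factorial_succ]
  push_cast [Nat.cast_sub hkn]
  field_simp

theorem exists_symN_comp_succAbove_le {E : Type*} {k n : ℕ} (hkn : k ≤ n)
    (q : (Fin k → E) → ℝ) (x : Fin (n + 1) → E) :
    ∃ m : Fin (n + 1), symN k n q (x ∘ m.succAbove) ≤ symN k (n + 1) q x := by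
  have hsum : ∑ m : Fin (n + 1), symN k n q (x ∘ m.succAbove) ≤
      ∑ _m : Fin (n + 1), symN k (n + 1) q x := by
    simp [sum_symN_comp_succAbove hkn]
  obtain ⟨m, -, hm⟩ := exists_le_of_sum_le univ_nonempty hsum
  exact ⟨m, hm⟩

theorem stmt11_general {E : Type*} (k n : ℕ) (hkn : k ≤ n)
    (q : (Fin k → E) → ℝ) (x : Fin (n + 1) → E) :
    (∃ g : Fin n → Fin (n + 1), Function.Injective g ∧
        symN k n q (x ∘ g) ≤ symN k (n + 1) q x) ∧
    (∀ Θ : Set E,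
      sInf {r : EReal | ∃ y : Fin n → E, (∀ i, y i ∈ Θ) ∧ r = (symN k n q y : EReal)} ≤
      sInf {r : EReal |
        ∃ y : Fin (n + 1) → E, (∀ i, y i ∈ Θ) ∧ r = (symN k (n + 1) q y : EReal)}) := by
  refine ⟨?_, fun Θ => le_sInf ?_⟩
  · obtain ⟨m, hm⟩ := exists_symN_comp_succAbove_le hkn q x
    exact ⟨m.succAbove, Fin.succAbove_right_injective, hm⟩
  · rintro _ ⟨y, hy, rfl⟩
    obtain ⟨m, hm⟩ := exists_symN_comp_succAbove_le hkn q y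
    refine (sInf_le ?_).trans (EReal.coe_le_coe_iff.2 hm)
    exact ⟨y ∘ m.succAbove, fun _ => hy _, rfl⟩

theorem stmt11 {E : Type*} (k n : ℕ) (hk : 1 ≤ k) (hkn : k ≤ n)
    (q : (Fin k → E) → ℝ) (x : Fin (n + 1) → E) :
    (∃ g : Fin n → Fin (n + 1), Function.Injective g ∧
        symN k n q (x ∘ g) ≤ symN k (n + 1) q x) ∧
    (∀ Θ : Set E,
      sInf {r : EReal | ∃ y : Fin n → E, (∀ i, y i ∈ Θ) ∧ r = (symN k n q y : EReal)} ≤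
      sInf {r : EReal |
        ∃ y : Fin (n + 1) → E, (∀ i, y i ∈ Θ) ∧ r = (symN k (n + 1) q y : EReal)}) :=
  stmt11_general k n hkn q x
end

section
/- Let E be a type, let 1 ≤ k ≤ n be integers, let x : Fin n → E, and let q : (Fin k → E) → ℝ. Then | n^(−k) · ∑_{f : Fin k → Fin n} q(x ∘ f) − sym_n q(x) | ≤ (k(k−1)/n) · max_{f : Fin k → Fin n} |q(x ∘ f)|. -/
open Finset

theorem Nat.pow_succ_le_descFactorial_add_choose_two_mul_pow (n k : ℕ) :
    n ^ (k + 1) ≤ n.descFactorial (k + 1) + (k + 1).choose 2 * n ^ k := by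
  induction k with
  | zero => simp
  | succ k ih =>
    have hsplit : n ≤ (n - (k + 1)) + (k + 1) := le_tsub_add
    have hdesc : n.descFactorial (k + 1) ≤ n ^ (k + 1) := n.descFactorial_le_pow (k + 1)
    have hchoose : (k + 2).choose 2 = (k + 1).choose 2 + (k + 1) := by
      rw [Nat.choose_succ_succ', Nat.choose_one_right, add_comm]
    calc n ^ (k + 2) = n * n ^ (k + 1) := by ring
      _ ≤ n * (n.descFactorial (k + 1) + (k + 1).choose 2 * n ^ k) := by gcongr
      _ = n * n.descFactorial (k + 1) + (k + 1).choose 2 * n ^ (k + 1) := by ring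
      _ ≤ ((n - (k + 1)) + (k + 1)) * n.descFactorial (k + 1)
            + (k + 1).choose 2 * n ^ (k + 1) := by gcongr
      _ ≤ n.descFactorial (k + 2) + (k + 1) * n ^ (k + 1) + (k + 1).choose 2 * n ^ (k + 1) := by
          rw [Nat.descFactorial_succ n (k + 1), add_mul]; gcongr
      _ = n.descFactorial (k + 2) + (k + 2).choose 2 * n ^ (k + 1) := by
          rw [hchoose]; ring

theorem two_mul_pow_sub_descFactorial_div_pow_le {n : ℕ} (hn : 0 < n) (k : ℕ) :
    2 * ((n : ℝ) ^ k - n.descFactorial k) / (n : ℝ) ^ k ≤ k * (k - 1) / n := by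
  cases k with
  | zero => simp
  | succ k =>
    have hnR : (0 : ℝ) < n := by exact_mod_cast hn
    have hle : ((n ^ (k + 1) : ℕ) : ℝ) ≤ n.descFactorial (k + 1) + (k + 1).choose 2 * n ^ k := by
      exact_mod_cast Nat.pow_succ_le_descFactorial_add_choose_two_mul_pow n k
    rw [Nat.cast_choose_two] at hle
    rw [div_le_div_iff₀ (by positivity) hnR]
    push_cast at hle ⊢
    calc 2 * ((n : ℝ) ^ (k + 1) - n.descFactorial (k + 1)) * n
        ≤ 2 * (((k : ℝ) + 1) * ((k : ℝ) + 1 - 1) / 2 * (n : ℝ) ^ k) * n := by gcongr; linarith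
      _ = ((k : ℝ) + 1) * ((k : ℝ) + 1 - 1) * (n : ℝ) ^ (k + 1) := by ring

theorem abs_inv_card_mul_sum_sub_inv_card_mul_sum_le {α : Type*} [DecidableEq α]
    {s t : Finset α} (hst : s ⊆ t) (hs : s.Nonempty) {g : α → ℝ} {M : ℝ}
    (hM : ∀ a ∈ t, |g a| ≤ M) :
    |(#t : ℝ)⁻¹ * ∑ a ∈ t, g a - (#s : ℝ)⁻¹ * ∑ a ∈ s, g a| ≤ 2 * (#t - #s) / #t * M := by
  have hS : (0 : ℝ) < #s := by exact_mod_cast hs.card_pos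
  have hST : (#s : ℝ) ≤ #t := by exact_mod_cast card_le_card hst
  have hT : (0 : ℝ) < #t := hS.trans_le hST
  have hinv : (#t : ℝ)⁻¹ ≤ (#s : ℝ)⁻¹ := inv_anti₀ hS hST
  have hin : |∑ a ∈ s, g a| ≤ #s * M := by
    simpa using abs_sum_le_sum_abs g s |>.trans (sum_le_card_nsmul s _ M fun a ha ↦ hM a (hst ha))
  have hout : |∑ a ∈ t \ s, g a| ≤ (#t - #s) * M := by
    rw [← cast_card_sdiff hst]
    simpa using abs_sum_le_sum_abs g (t \ s) |>.trans
      (sum_le_card_nsmul _ _ M fun a ha ↦ hM a (sdiff_subset ha))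
  rw [← sum_sdiff hst]
  calc |(#t : ℝ)⁻¹ * (∑ a ∈ t \ s, g a + ∑ a ∈ s, g a) - (#s : ℝ)⁻¹ * ∑ a ∈ s, g a|
      = |(#t : ℝ)⁻¹ * ∑ a ∈ t \ s, g a - ((#s : ℝ)⁻¹ - (#t : ℝ)⁻¹) * ∑ a ∈ s, g a| := by
        congr 1; ring
    _ ≤ (#t : ℝ)⁻¹ * |∑ a ∈ t \ s, g a| + ((#s : ℝ)⁻¹ - (#t : ℝ)⁻¹) * |∑ a ∈ s, g a| := by
        refine (abs_sub _ _).trans_eq ?_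
        rw [abs_mul, abs_mul, abs_of_nonneg (inv_nonneg.2 hT.le), abs_of_nonneg (sub_nonneg.2 hinv)]
    _ ≤ (#t : ℝ)⁻¹ * ((#t - #s) * M) + ((#s : ℝ)⁻¹ - (#t : ℝ)⁻¹) * (#s * M) := by
        gcongr
    _ = 2 * (#t - #s) / #t * M := by field_simp; ring

theorem Fintype.card_filter_injective_s12 (α β : Type*) [Fintype α] [DecidableEq α] [Fintype β]
    [DecidableEq β] :
    #(univ.filter fun f : α → β ↦ Function.Injective f) = (card β).descFactorial (card α) := by
  rw [← Fintype.card_subtype, Fintype.card_congr (Equiv.subtypeInjectiveEquivEmbedding α β),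
    Fintype.card_embedding_eq]

theorem symN_eq_inv_card_mul_sum {E : Type*} {k n : ℕ} (hkn : k ≤ n) (q : (Fin k → E) → ℝ)
    (x : Fin n → E) :
    symN k n q x = (#(univ.filter fun f : Fin k → Fin n ↦ Function.Injective f) : ℝ)⁻¹ *
      ∑ f ∈ univ.filter (fun f : Fin k → Fin n ↦ Function.Injective f), q (x ∘ f) := by
  have hfac : ((n - k).factorial : ℝ) * n.descFactorial k = n.factorial := by
    exact_mod_cast Nat.factorial_mul_descFactorial hkn
  rw [symN, Fintype.card_filter_injective_s12, Fintype.card_fin, Fintype.card_fin, ← hfac,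
    div_mul_cancel_left₀ (by positivity)]

theorem stmt12 {E : Type*} (k n : ℕ) (hk : 1 ≤ k) (hkn : k ≤ n)
    (x : Fin n → E) (q : (Fin k → E) → ℝ) :
    |((n : ℝ) ^ k)⁻¹ * (∑ f : Fin k → Fin n, q (x ∘ f)) - symN k n q x|
      ≤ (k : ℝ) * ((k : ℝ) - 1) / (n : ℝ) *
          Finset.univ.sup' (Finset.univ_nonempty_iff.mpr ⟨fun _ => ⟨0, by omega⟩⟩)
            (fun f : Fin k → Fin n => |q (x ∘ f)|) := by
  set M := univ.sup' (univ_nonempty_iff.mpr ⟨fun _ => ⟨0, by omega⟩⟩)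
    (fun f : Fin k → Fin n => |q (x ∘ f)|)
  have hM : ∀ f ∈ univ, |q (x ∘ f)| ≤ M := fun f hf ↦ le_sup' (fun f ↦ |q (x ∘ f)|) hf
  have hM0 : 0 ≤ M := (abs_nonneg _).trans (hM (fun _ ↦ ⟨0, by omega⟩) (mem_univ _))
  have hinj : (univ.filter fun f : Fin k → Fin n ↦ Function.Injective f).Nonempty :=
    ⟨Fin.castLE hkn, by simpa using Fin.castLE_injective hkn⟩
  have hcard : ((n : ℝ) ^ k) = #(univ : Finset (Fin k → Fin n)) := by simp
  rw [symN_eq_inv_card_mul_sum hkn, hcard]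
  calc _ ≤ _ := abs_inv_card_mul_sum_sub_inv_card_mul_sum_le (subset_univ _) hinj hM
    _ = 2 * ((n : ℝ) ^ k - n.descFactorial k) / (n : ℝ) ^ k * M := by
        rw [Fintype.card_filter_injective_s12, ← hcard]; simp
    _ ≤ _ :=
        mul_le_mul_of_nonneg_right (two_mul_pow_sub_descFactorial_div_pow_le (by omega) k) hM0
end

section
/- Let E be a nonempty type, let k ≥ 1, and let q : (Fin k → E) → ℝ satisfy |q(z)| ≤ M for all z and some M ≥ 0. For n ≥ 1 define u_n = inf_{x : Fin n → E} n^(−k) · ∑_{f : Fin k → Fin n} q(x ∘ f), and for n ≥ k define ℓ_n = inf_{x : Fin n → E} sym_n q(x). Then: (i) ℓ_n ≤ ℓ_{n+1} for all n ≥ k; (ii) ℓ_n ≤ u_N for all n ≥ k and all N ≥ 1; (iii) 0 ≤ u_n − ℓ_n ≤ k(k−1)·M/n for all n ≥ k; and (iv) sup_{n ≥ k} ℓ_n = inf_{n ≥ 1} u_n. -/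
/-!
Restricting a uniformly random map (resp. injection) `Fin n → Fin N` along an injection
`Fin k → Fin n` gives a uniformly random map (resp. injection) `Fin k → Fin N`. Hence the free
average of `q` over `x : Fin N → E` is the average of `sym_n q (x ∘ J)` over all `J`, and
`sym_{n+1} q x` is the average of `sym_n q (x ∘ ψ)` over injective `ψ`; taking infima gives
`ℓ_n ≤ u_N` and `ℓ_n ≤ ℓ_{n+1}`. The free average and `sym_n q x` differ only through the
non-injective selections, a fraction `1 - n(n-1)⋯(n-k+1)/n^k ≤ k(k-1)/(2n)` of all of them, so
`u_n - ℓ_n ≤ k(k-1)M/n`, and the gap closes in the limit.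
-/

open Finset Function
open scoped BigOperators

theorem Finset.expect_comp_of_card_fiber_eq {ι κ K : Type*} [Semifield K] [CharZero K]
    [DecidableEq κ] {s : Finset ι} {t : Finset κ} {r : ι → κ} (hr : ∀ i ∈ s, r i ∈ t)
    (hs : s.Nonempty) {c : ℕ} (hc : ∀ j ∈ t, #{i ∈ s | r i = j} = c) (f : κ → K) :
    𝔼 i ∈ s, f (r i) = 𝔼 j ∈ t, f j := by
  have hsum : ∀ g : κ → K, ∑ i ∈ s, g (r i) = c * ∑ j ∈ t, g j := fun g => by
    rw [← sum_fiberwise_of_maps_to hr, mul_sum]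
    refine sum_congr rfl fun j hj => ?_
    rw [sum_congr rfl fun i hi => by rw [(mem_filter.1 hi).2], sum_const, hc j hj, nsmul_eq_mul]
  have hcard : (#s : K) = c * #t := by simpa using hsum 1
  have hc0 : (c : K) ≠ 0 := by
    rintro h
    rw [h, zero_mul, Nat.cast_eq_zero] at hcard
    exact hs.card_ne_zero hcard
  rw [expect_eq_sum_div_card, expect_eq_sum_div_card, hsum, hcard, mul_div_mul_left _ _ hc0]

theorem Fintype.expect_comp_of_injective {α β γ M : Type*} [Fintype α] [DecidableEq α]
    [Fintype β] [DecidableEq β] [Fintype γ] [Nonempty γ]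
    [AddCommMonoid M] [Module ℚ≥0 M] {φ : α → β} (hφ : Injective φ) (F : (α → γ) → M) :
    𝔼 J : β → γ, F (J ∘ φ) = 𝔼 g : α → γ, F g := by
  classical
  let e : α ⊕ ↥(Set.range φ)ᶜ ≃ β :=
    (Equiv.sumCongr (Equiv.ofInjective φ hφ) (Equiv.refl _)).trans (Equiv.Set.sumCompl _)
  let split : (β → γ) ≃ (α → γ) × (↥(Set.range φ)ᶜ → γ) :=
    (e.arrowCongr (Equiv.refl γ)).symm.trans (Equiv.sumArrowEquivProdArrow _ _ _)
  have hsplit : ∀ J, (split J).1 = J ∘ φ := fun J => by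
    funext a; simp [split, e, Equiv.arrowCongr]
  rw [Fintype.expect_equiv split _ (fun p => F p.1) (fun J => by rw [hsplit]),
    ← univ_product_univ, expect_product' univ univ (fun g _ => F g)]
  simp

theorem Finset.expect_injective_comp_of_injective {α β δ K : Type*} [Fintype α] [DecidableEq α]
    [Fintype β] [DecidableEq β] [Fintype δ] [DecidableEq δ] [Semifield K] [CharZero K]
    (hβδ : Fintype.card β ≤ Fintype.card δ) {φ : α → β} (hφ : Injective φ) (F : (α → δ) → K) :
    𝔼 ψ ∈ {ψ : β → δ | Injective ψ}, F (ψ ∘ φ) = 𝔼 χ ∈ {χ : α → δ | Injective χ}, F χ := by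
  set S : Finset (β → δ) := {ψ | Injective ψ}
  set T : Finset (α → δ) := {χ | Injective χ}
  have hmaps : ∀ ψ ∈ S, ψ ∘ φ ∈ T := fun ψ hψ => by
    simp only [S, T, mem_filter, mem_univ, true_and] at hψ ⊢
    exact hψ.comp hφ
  -- The fibres of `ψ ↦ ψ ∘ φ` over `χ` and `σ ∘ χ` correspond under `ψ ↦ σ ∘ ψ`.
  have hfiber_le : ∀ χ ∈ T, ∀ χ' ∈ T, #{ψ ∈ S | ψ ∘ φ = χ} ≤ #{ψ ∈ S | ψ ∘ φ = χ'} := by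
    intro χ hχ χ' hχ'
    simp only [T, mem_filter, mem_univ, true_and] at hχ hχ'
    obtain ⟨σ, hσ⟩ := Equiv.Perm.exists_extending_pair χ χ' hχ hχ'
    refine card_le_card_of_injOn (σ ∘ ·) (fun ψ hψ => ?_) fun ψ _ ψ' _ h => σ.injective.comp_left h
    simp only [S, coe_filter, mem_filter, mem_univ, true_and, Set.mem_ofPred_eq] at hψ ⊢
    exact ⟨σ.injective.comp hψ.1, funext fun a => by rw [comp_apply, comp_apply, ← hσ, ← hψ.2]; rfl⟩
  obtain ⟨ψ₀⟩ := Function.Embedding.nonempty_of_card_le hβδ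
  have hψ₀ : ⇑ψ₀ ∈ S := by simpa [S] using ψ₀.injective
  exact expect_comp_of_card_fiber_eq hmaps ⟨ψ₀, hψ₀⟩
    (fun χ hχ => (hfiber_le _ hχ _ (hmaps ψ₀ hψ₀)).antisymm (hfiber_le _ (hmaps ψ₀ hψ₀) _ hχ)) F

theorem Finset.abs_expect_sub_expect_le {ι K : Type*} [Field K] [LinearOrder K]
    [IsStrictOrderedRing K] {s t : Finset ι} (hst : s ⊆ t) (hs : s.Nonempty) {f : ι → K} {M : K}
    (hf : ∀ i ∈ t, |f i| ≤ M) :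
    |𝔼 i ∈ t, f i - 𝔼 i ∈ s, f i| ≤ 2 * (1 - #s / #t) * M := by
  classical
  have hsum := sum_sdiff hst (f := f)
  have hcard : (#(t \ s) : K) = #t - #s := by
    rw [card_sdiff_of_subset hst, Nat.cast_sub (card_le_card hst)]
  have ha : (0 : K) < #s := by exact_mod_cast hs.card_pos
  have hab : (#s : K) ≤ #t := by exact_mod_cast card_le_card hst
  have habs : ∀ u : Finset ι, u ⊆ t → |∑ i ∈ u, f i| ≤ #u * M := fun u hu =>
    (abs_sum_le_sum_abs _ _).trans <| by simpa using sum_le_sum fun i hi => hf i (hu hi)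
  have hA := habs s hst
  have hB := habs (t \ s) sdiff_subset
  rw [hcard] at hB
  rw [expect_eq_sum_div_card, expect_eq_sum_div_card, ← hsum]
  set a : K := (#s : K)
  set b : K := (#t : K)
  have hb : 0 < b := ha.trans_le hab
  have key : (∑ i ∈ t \ s, f i + ∑ i ∈ s, f i) / b - (∑ i ∈ s, f i) / a
      = (a * ∑ i ∈ t \ s, f i - (b - a) * ∑ i ∈ s, f i) / (a * b) := by
    field_simp; ring
  rw [key, abs_div, abs_of_pos (mul_pos ha hb), div_le_iff₀ (mul_pos ha hb)]
  calc |a * ∑ i ∈ t \ s, f i - (b - a) * ∑ i ∈ s, f i|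
      ≤ a * |∑ i ∈ t \ s, f i| + (b - a) * |∑ i ∈ s, f i| := by
        refine (abs_sub _ _).trans ?_
        rw [abs_mul, abs_mul, abs_of_pos ha, abs_of_nonneg (sub_nonneg.2 hab)]
    _ ≤ a * ((b - a) * M) + (b - a) * (a * M) := by gcongr
    _ = 2 * (1 - a / b) * M * (a * b) := by field_simp; ring

theorem Nat.two_mul_pow_sub_descFactorial_le (n : ℕ) :
    ∀ j ≤ n, 2 * n * ((n : ℝ) ^ j - n.descFactorial j) ≤ j * (j - 1) * (n : ℝ) ^ j
  | 0, _ => by simp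
  | j + 1, hj => by
    have ih := two_mul_pow_sub_descFactorial_le n j (by omega)
    have hD : (n.descFactorial j : ℝ) ≤ (n : ℝ) ^ j := by exact_mod_cast n.descFactorial_le_pow j
    have hsucc : (n.descFactorial (j + 1) : ℝ) = (n - j) * n.descFactorial j := by
      rw [Nat.descFactorial_succ, Nat.cast_mul, Nat.cast_sub (by omega)]
    rw [hsucc, pow_succ]
    push_cast
    nlinarith [mul_le_mul_of_nonneg_left ih (Nat.cast_nonneg n),
      mul_le_mul_of_nonneg_left hD (by positivity : (0 : ℝ) ≤ j * n)]

theorem Fintype.card_injective_eq_descFactorial {α β : Type*} [Fintype α] [DecidableEq α]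
    [Fintype β] [DecidableEq β] :
    #{φ : α → β | Injective φ} = (Fintype.card β).descFactorial (Fintype.card α) := by
  rw [← Fintype.card_embedding_eq, ← Fintype.card_subtype]
  exact Fintype.card_congr (Equiv.subtypeInjectiveEquivEmbedding α β)

theorem Fin.inv_pow_mul_sum_eq_expect {k n : ℕ} (F : (Fin k → Fin n) → ℝ) :
    ((n : ℝ) ^ k)⁻¹ * ∑ f : Fin k → Fin n, F f = 𝔼 f, F f := by
  rw [Fintype.expect_eq_sum_div_card, Fintype.card_fun, Fintype.card_fin, Fintype.card_fin,
    Nat.cast_pow, inv_mul_eq_div]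

theorem sSup_eq_sInf_of_sub_le_div {l u : ℕ → ℝ} {k : ℕ} {C : ℝ}
    (hlu : ∀ n N, k ≤ n → 1 ≤ N → l n ≤ u N) (hgap : ∀ n, k ≤ n → u n - l n ≤ C / n) :
    sSup {r : ℝ | ∃ n, k ≤ n ∧ r = l n} = sInf {r : ℝ | ∃ n, 1 ≤ n ∧ r = u n} := by
  have hL : {r : ℝ | ∃ n, k ≤ n ∧ r = l n}.Nonempty := ⟨l k, k, le_rfl, rfl⟩
  have hU : {r : ℝ | ∃ n, 1 ≤ n ∧ r = u n}.Nonempty := ⟨u 1, 1, le_rfl, rfl⟩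
  have hLbdd : BddAbove {r : ℝ | ∃ n, k ≤ n ∧ r = l n} := ⟨u 1, by
    rintro _ ⟨n, hn, rfl⟩; exact hlu n 1 hn le_rfl⟩
  have hUbdd : BddBelow {r : ℝ | ∃ n, 1 ≤ n ∧ r = u n} := ⟨l k, by
    rintro _ ⟨N, hN, rfl⟩; exact hlu k N le_rfl hN⟩
  refine le_antisymm (csSup_le hL ?_) ?_
  · rintro _ ⟨n, hn, rfl⟩
    exact le_csInf hU fun _ ⟨N, hN, h⟩ => h ▸ hlu n N hn hN
  · rw [← sub_nonpos]
    refine ge_of_tendsto (tendsto_const_div_atTop_nhds_zero_nat C)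
      (Filter.eventually_atTop.2 ⟨max k 1, fun n hn => ?_⟩)
    have hkn : k ≤ n := le_of_max_le_left hn
    calc _ ≤ u n - l n := sub_le_sub (csInf_le hUbdd ⟨n, le_of_max_le_right hn, rfl⟩)
          (le_csSup hLbdd ⟨n, hkn, rfl⟩)
      _ ≤ C / n := hgap n hkn

section symN

variable {E : Type*} {k n : ℕ}

theorem symN_eq_expect (hkn : k ≤ n) (q : (Fin k → E) → ℝ) (x : Fin n → E) :
    symN k n q x = 𝔼 φ ∈ {φ : Fin k → Fin n | Injective φ}, q (x ∘ φ) := by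
  rw [symN, expect_eq_sum_div_card, Fintype.card_injective_eq_descFactorial, Fintype.card_fin,
    Fintype.card_fin, ← Nat.factorial_mul_descFactorial hkn, Nat.cast_mul]
  have : ((n - k).factorial : ℝ) ≠ 0 := by positivity
  field_simp

theorem Fin.nonempty_filter_injective (hkn : k ≤ n) :
    ({φ : Fin k → Fin n | Injective φ} : Finset (Fin k → Fin n)).Nonempty :=
  ⟨Fin.castLE hkn, by simpa using Fin.castLE_injective hkn⟩

theorem le_symN (hkn : k ≤ n) {q : (Fin k → E) → ℝ} {c : ℝ} (hq : ∀ z, c ≤ q z)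
    (x : Fin n → E) : c ≤ symN k n q x := by
  rw [symN_eq_expect hkn]
  exact le_expect (Fin.nonempty_filter_injective hkn) fun φ _ => hq _

theorem symN_eq_expect_symN_comp {m : ℕ} (hkn : k ≤ n) (hnm : n ≤ m) (q : (Fin k → E) → ℝ)
    (x : Fin m → E) :
    symN k m q x = 𝔼 ψ ∈ {ψ : Fin n → Fin m | Injective ψ}, symN k n q (x ∘ ψ) := by
  simp_rw [symN_eq_expect hkn, symN_eq_expect (hkn.trans hnm)]
  rw [expect_comm, ← expect_const (Fin.nonempty_filter_injective hkn) (𝔼 χ ∈ _, q (x ∘ χ))]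
  exact expect_congr rfl fun φ hφ => (expect_injective_comp_of_injective (by simpa)
    (by simpa using hφ) (fun χ => q (x ∘ χ))).symm

theorem expect_comp_eq_expect_symN_comp {N : ℕ} (hN : 0 < N) (hkn : k ≤ n)
    (q : (Fin k → E) → ℝ) (x : Fin N → E) :
    𝔼 f : Fin k → Fin N, q (x ∘ f) = 𝔼 J : Fin n → Fin N, symN k n q (x ∘ J) := by
  have : NeZero N := ⟨hN.ne'⟩
  simp_rw [symN_eq_expect hkn]
  rw [expect_comm, ← expect_const (Fin.nonempty_filter_injective hkn) (𝔼 f, q (x ∘ f))]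
  exact expect_congr rfl fun φ hφ =>
    (Fintype.expect_comp_of_injective (by simpa using hφ) (fun f => q (x ∘ f))).symm

theorem expect_comp_sub_symN_le (hn : 0 < n) (hkn : k ≤ n) {M : ℝ} (hM : 0 ≤ M)
    {q : (Fin k → E) → ℝ} (hq : ∀ z, |q z| ≤ M) (x : Fin n → E) :
    𝔼 f : Fin k → Fin n, q (x ∘ f) - symN k n q x ≤ k * (k - 1) * M / n := by
  have hgap := abs_expect_sub_expect_le (subset_univ _) (Fin.nonempty_filter_injective hkn)
    (fun f _ => hq (x ∘ f))
  rw [card_univ, Fintype.card_fun, Fintype.card_fin, Fintype.card_fin,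
    Fintype.card_injective_eq_descFactorial, Fintype.card_fin, Fintype.card_fin] at hgap
  have hnR : (0 : ℝ) < n := by exact_mod_cast hn
  have hpow : (0 : ℝ) < (n : ℝ) ^ k := by positivity
  have hfrac : 2 * (1 - (n.descFactorial k : ℝ) / (n ^ k : ℕ)) ≤ k * (k - 1) / n := by
    rw [le_div_iff₀ hnR, Nat.cast_pow, one_sub_div hpow.ne', mul_div_assoc', div_mul_eq_mul_div,
      div_le_iff₀ hpow]
    linarith [Nat.two_mul_pow_sub_descFactorial_le n k hkn]
  rw [symN_eq_expect hkn]
  calc _ ≤ _ := (le_abs_self _).trans hgap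
    _ ≤ k * (k - 1) / n * M := mul_le_mul_of_nonneg_right hfrac hM
    _ = k * (k - 1) * M / n := div_mul_eq_mul_div _ _ _

end symN

theorem stmt13 {E : Type*} [Nonempty E] (k : ℕ) (hk : 1 ≤ k) (M : ℝ) (hM : 0 ≤ M)
    (q : (Fin k → E) → ℝ) (hq : ∀ z, |q z| ≤ M)
    (u l : ℕ → ℝ)
    (hu : ∀ n, u n = sInf {r : ℝ | ∃ x : Fin n → E,
      r = ((n : ℝ) ^ k)⁻¹ * ∑ f : Fin k → Fin n, q (x ∘ f)})
    (hl : ∀ n, l n = sInf {r : ℝ | ∃ x : Fin n → E, r = symN k n q x}) :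
    (∀ n, k ≤ n → l n ≤ l (n + 1)) ∧
    (∀ n N, k ≤ n → 1 ≤ N → l n ≤ u N) ∧
    (∀ n, k ≤ n → 0 ≤ u n - l n ∧ u n - l n ≤ (k : ℝ) * ((k : ℝ) - 1) * M / (n : ℝ)) ∧
    (sSup {r : ℝ | ∃ n, k ≤ n ∧ r = l n} = sInf {r : ℝ | ∃ n, 1 ≤ n ∧ r = u n}) := by
  simp only [Fin.inv_pow_mul_sum_eq_expect] at hu
  have hq_lower : ∀ z, -M ≤ q z := fun z => neg_le_of_abs_le (hq z)
  have l_le : ∀ n, k ≤ n → ∀ x, l n ≤ symN k n q x := fun n hkn x =>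
    hl n ▸ csInf_le ⟨-M, by rintro _ ⟨y, rfl⟩; exact le_symN hkn hq_lower y⟩ ⟨x, rfl⟩
  have le_l : ∀ n c, (∀ x : Fin n → E, c ≤ symN k n q x) → c ≤ l n := fun n c h =>
    hl n ▸ le_csInf ⟨_, Classical.arbitrary _, rfl⟩ (by rintro _ ⟨x, rfl⟩; exact h x)
  have u_le : ∀ n, 0 < n → ∀ x : Fin n → E, u n ≤ 𝔼 f : Fin k → Fin n, q (x ∘ f) :=
    fun n hn x => hu n ▸ csInf_le ⟨-M, by
      rintro _ ⟨y, rfl⟩; exact le_expect ⟨fun _ => ⟨0, hn⟩, mem_univ _⟩ fun f _ => hq_lower _⟩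
      ⟨x, rfl⟩
  have le_u : ∀ n c, (∀ x : Fin n → E, c ≤ 𝔼 f : Fin k → Fin n, q (x ∘ f)) → c ≤ u n :=
    fun n c h => hu n ▸ le_csInf ⟨_, Classical.arbitrary _, rfl⟩ (by rintro _ ⟨x, rfl⟩; exact h x)
  have mono : ∀ n, k ≤ n → l n ≤ l (n + 1) := fun n hkn => le_l _ _ fun x => by
    rw [symN_eq_expect_symN_comp hkn n.le_succ]
    exact le_expect (Fin.nonempty_filter_injective n.le_succ) fun ψ _ => l_le n hkn _
  have l_le_u : ∀ n N, k ≤ n → 1 ≤ N → l n ≤ u N := fun n N hkn hN => le_u _ _ fun x => by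
    rw [expect_comp_eq_expect_symN_comp hN hkn]
    exact le_expect ⟨fun _ => ⟨0, hN⟩, mem_univ _⟩ fun J _ => l_le n hkn _
  have gap : ∀ n, k ≤ n → u n - l n ≤ k * (k - 1) * M / n := fun n hkn =>
    sub_le_comm.1 <| le_l _ _ fun x => sub_le_comm.1 <|
      (sub_le_sub_right (u_le n (by omega) x) _).trans
        (expect_comp_sub_symN_le (by omega) hkn hM hq x)
  exact ⟨mono, l_le_u, fun n hkn => ⟨sub_nonneg.2 (l_le_u n n hkn (hk.trans hkn)), gap n hkn⟩,
    sSup_eq_sInf_of_sub_le_div l_le_u gap⟩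
end

section
/- Let d, m ≥ 1, let f be a real polynomial in m variables, and let α₁, …, α_m ∈ ℕ^d be multi-indices. Then there exist K ∈ ℕ and a real polynomial q in K·d variables (an element of MvPolynomial (Fin K × Fin d) ℝ) such that for every n ≥ 1 and every x : Fin n → (Fin d → ℝ), f( (1/n)·∑_{i ∈ Fin n} x_i^{α₁}, …, (1/n)·∑_{i ∈ Fin n} x_i^{α_m} ) = n^(−K) · ∑_{h : Fin K → Fin n} q̂(x ∘ h), where x_i^{α} denotes ∏_{t ∈ Fin d} (x_i(t))^{α(t)} and q̂(z) denotes the evaluation of q at the point z : Fin K → (Fin d → ℝ). Moreover one may take K equal to the total degree of f. -/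
/-!
Expanding `f` into monomials, it suffices to treat `∏ᵢ Mᵢ ^ uᵢ`, where `Mᵢ` is the empirical
moment of `α i`. Listing every `i` with multiplicity `uᵢ` writes it as a product of `|u| ≤ deg f`
averages over `j : Fin n`, and by distributivity a product of `K` averages is the average over
`h : Fin K → Fin n` of the product of the factors evaluated at `x (h k)`. Padding with the zero
exponent, whose empirical moment is `1`, brings the number of factors up to `K = deg f`.
-/

open Finset MvPolynomial

theorem List.prod_univ_fin_getD {M α : Type*} [CommMonoid M] (L : List α) (d : α) (g : α → M)
    (hg : g d = 1) {K : ℕ} (hK : L.length ≤ K) :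
    ∏ k : Fin K, g (L.getD k d) = (L.map g).prod := by
  induction L generalizing K with
  | nil => simp [hg]
  | cons a L ih =>
    cases K with
    | zero => simp at hK
    | succ K =>
      rw [Fin.prod_univ_succ, List.map_cons, List.prod_cons]
      simp only [Fin.val_zero, List.getD_cons_zero, Fin.val_succ, List.getD_cons_succ]
      rw [ih (by simpa using hK)]

theorem Finsupp.prod_map_toMultiset {ι M : Type*} [CommMonoid M] (u : ι →₀ ℕ) (S : ι → M) :
    (u.toMultiset.map S).prod = u.prod fun i e => S i ^ e := by
  classical
  rw [Finset.prod_multiset_map_count, Finsupp.toFinset_toMultiset]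
  simp only [Finsupp.count_toMultiset]
  rfl

section EmpiricalMoments

variable {σ ι : Type*} {n : ℕ}

noncomputable def tupleMean (x : Fin n → σ → ℝ) (K : ℕ) : MvPolynomial (Fin K × σ) ℝ →ₗ[ℝ] ℝ :=
  ((n : ℝ) ^ K)⁻¹ • ∑ h : Fin K → Fin n, (aeval fun p : Fin K × σ => x (h p.1) p.2).toLinearMap

theorem tupleMean_apply (x : Fin n → σ → ℝ) (K : ℕ) (q : MvPolynomial (Fin K × σ) ℝ) :
    tupleMean x K q = ((n : ℝ) ^ K)⁻¹ * ∑ h : Fin K → Fin n, eval (fun p => x (h p.1) p.2) q := by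
  simp [tupleMean]

/-- Row `k < |u|` is `α` of the `k`-th entry of `u.toMultiset` (each `i` repeated `u i` times);
the rows beyond are zero. -/
noncomputable def momentRows (α : ι → σ → ℕ) (u : ι →₀ ℕ) (K : ℕ) : Fin K → σ → ℕ :=
  fun k => (u.toMultiset.toList.map α).getD k 0

theorem prod_momentRows {M : Type*} [CommMonoid M] (α : ι → σ → ℕ) {u : ι →₀ ℕ} {K : ℕ}
    (hu : (u.sum fun _ e => e) ≤ K) (g : (σ → ℕ) → M) (hg : g 0 = 1) :
    ∏ k, g (momentRows α u K k) = u.prod fun i e => g (α i) ^ e := by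
  have hlen : (u.toMultiset.toList.map α).length ≤ K := by
    rw [List.length_map, Multiset.length_toList, Finsupp.card_toMultiset]
    exact hu
  unfold momentRows
  rw [List.prod_univ_fin_getD _ _ g hg hlen, List.map_map, ← Multiset.prod_coe,
    ← Multiset.map_coe, Multiset.coe_toList, Finsupp.prod_map_toMultiset]
  rfl

variable [Fintype σ]

noncomputable def empiricalMoment (x : Fin n → σ → ℝ) (a : σ → ℕ) : ℝ :=
  (n : ℝ)⁻¹ * ∑ j, ∏ t, x j t ^ a t

theorem empiricalMoment_zero (hn : n ≠ 0) (x : Fin n → σ → ℝ) : empiricalMoment x 0 = 1 := by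
  simp [empiricalMoment, hn]

noncomputable def rowsMonomial {K : ℕ} (β : Fin K → σ → ℕ) : MvPolynomial (Fin K × σ) ℝ :=
  ∏ k, ∏ t, X (k, t) ^ β k t

theorem tupleMean_rowsMonomial (x : Fin n → σ → ℝ) {K : ℕ} (β : Fin K → σ → ℕ) :
    tupleMean x K (rowsMonomial β) = ∏ k, empiricalMoment x (β k) := by
  rw [tupleMean_apply]
  simp only [rowsMonomial, empiricalMoment, map_prod, map_pow, eval_X, prod_mul_distrib,
    prod_const, card_univ, Fintype.card_fin, inv_pow]
  rw [Fintype.prod_sum]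

noncomputable def momentDual (f : MvPolynomial ι ℝ) (α : ι → σ → ℕ) :
    MvPolynomial (Fin f.totalDegree × σ) ℝ :=
  ∑ u ∈ f.support, f.coeff u • rowsMonomial (momentRows α u f.totalDegree)

theorem tupleMean_momentDual (hn : n ≠ 0) (x : Fin n → σ → ℝ) (f : MvPolynomial ι ℝ)
    (α : ι → σ → ℕ) :
    tupleMean x f.totalDegree (momentDual f α) = eval (fun i => empiricalMoment x (α i)) f := by
  rw [momentDual, eval_eq, map_sum]
  refine sum_congr rfl fun u hu => ?_
  rw [map_smul, tupleMean_rowsMonomial, smul_eq_mul,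
    prod_momentRows α (le_totalDegree hu) _ (empiricalMoment_zero hn x)]
  rfl

end EmpiricalMoments

theorem stmt14_general (d m : ℕ)
    (f : MvPolynomial (Fin m) ℝ) (α : Fin m → Fin d → ℕ) :
    ∃ (K : ℕ) (q : MvPolynomial (Fin K × Fin d) ℝ),
      K = f.totalDegree ∧
      ∀ (n : ℕ), 1 ≤ n → ∀ x : Fin n → Fin d → ℝ,
        MvPolynomial.eval
            (fun i : Fin m => ((n : ℝ))⁻¹ * ∑ j : Fin n, ∏ t : Fin d, (x j t) ^ (α i t)) f
          = ((n : ℝ) ^ K)⁻¹ * ∑ h : Fin K → Fin n,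
              MvPolynomial.eval (fun p : Fin K × Fin d => x (h p.1) p.2) q := by
  refine ⟨f.totalDegree, momentDual f α, rfl, fun n hn x => ?_⟩
  rw [← tupleMean_apply, tupleMean_momentDual (by omega)]
  rfl

theorem stmt14 (d m : ℕ) (hd : 1 ≤ d) (hm : 1 ≤ m)
    (f : MvPolynomial (Fin m) ℝ) (α : Fin m → Fin d → ℕ) :
    ∃ (K : ℕ) (q : MvPolynomial (Fin K × Fin d) ℝ),
      K = f.totalDegree ∧
      ∀ (n : ℕ), 1 ≤ n → ∀ x : Fin n → Fin d → ℝ,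
        MvPolynomial.eval
            (fun i : Fin m => ((n : ℝ))⁻¹ * ∑ j : Fin n, ∏ t : Fin d, (x j t) ^ (α i t)) f
          = ((n : ℝ) ^ K)⁻¹ * ∑ h : Fin K → Fin n,
              MvPolynomial.eval (fun p : Fin K × Fin d => x (h p.1) p.2) q :=
  stmt14_general d m f α
end

section
/- Let e, k ≥ 1, let Θ ⊆ ℝ^e be a nonempty compact set, and let q : (Fin k → ℝ^e) → ℝ be continuous. Then inf_{n ≥ 1} inf_{x : Fin n → Θ} n^(−k) · ∑_{f : Fin k → Fin n} q(x ∘ f) = inf_{μ} ∫ q d(μ^{⊗k}), where the right-hand infimum is over all Borel probability measures μ on ℝ^e with μ(Θ) = 1, and μ^{⊗k} denotes the k-fold product measure on (Fin k → ℝ^e). -/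
/-!
Pushing the uniform measure on `Fin n` forward along `x` gives the empirical measure of `x`, and
the normalized sum over `f : Fin k → Fin n` is the integral of `q` against its `k`-fold product.
This gives one inequality between the two infima. For the other one, draw `x` i.i.d. from `μ`.
If `f` is injective, then `x ∘ f` has law `μ^{⊗k}`. At most a fraction `k² / n` of all maps `f`
are not injective, and `|q| ≤ C` on `Θ^k`. So the normalized sum has expectation at most
`∫ q d(μ^{⊗k}) + 2 C k² / n`, and some `x ∈ Θⁿ` does at least as well.
-/

open MeasureTheory ProbabilityTheory Finset

section ProductMeasure

variable {α : Type*} [MeasurableSpace α] (μ : Measure α) [IsProbabilityMeasure μ]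
  {ι κ : Type*} [Fintype ι] [Fintype κ]

theorem measurePreserving_comp_pi_of_injective {f : κ → ι} (hf : f.Injective) :
    MeasurePreserving (fun x : ι → α => x ∘ f) (Measure.pi fun _ => μ)
      (Measure.pi fun _ => μ) := by
  have hindep : iIndepFun (fun j (x : ι → α) => x (f j)) (Measure.pi fun _ => μ) :=
    (iIndepFun_pi (X := fun _ => id) fun _ => aemeasurable_id).precomp hf
  refine ⟨by fun_prop, ?_⟩
  change Measure.map (fun (x : ι → α) j => x (f j)) _ = _
  rw [(iIndepFun_iff_map_fun_eq_pi_map fun j => (measurable_pi_apply (f j)).aemeasurable).1 hindep]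
  exact congrArg Measure.pi (funext fun j => (measurePreserving_eval _ (f j)).map_eq)

theorem integral_comp_pi_of_injective {g : (κ → α) → ℝ} (hg : Measurable g) {f : κ → ι}
    (hf : f.Injective) :
    ∫ x, g (x ∘ f) ∂(Measure.pi fun _ : ι => μ) = ∫ z, g z ∂(Measure.pi fun _ => μ) := by
  have hmp := measurePreserving_comp_pi_of_injective μ hf
  rw [← hmp.map_eq, integral_map hmp.measurable.aemeasurable hg.aestronglyMeasurable]

theorem ae_forall_mem_pi {s : Set α} (hs : MeasurableSet s) (hμs : μ s = 1) :
    ∀ᵐ x ∂(Measure.pi fun _ : ι => μ), ∀ i, x i ∈ s := by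
  have hae : ∀ᵐ a ∂μ, a ∈ s := by
    rwa [ae_mem_iff_measure_eq hs.nullMeasurableSet, measure_univ]
  exact ae_all_iff.2 fun i => (Measure.quasiMeasurePreserving_eval _ i).ae hae

end ProductMeasure

theorem integral_uniformOn_univ {Ω : Type*} [MeasurableSpace Ω] [MeasurableSingletonClass Ω]
    [Fintype Ω] (f : Ω → ℝ) :
    ∫ ω, f ω ∂uniformOn Set.univ = (Fintype.card Ω : ℝ)⁻¹ * ∑ ω, f ω := by
  rw [integral_fintype Integrable.of_finite, Finset.mul_sum]
  simp [measureReal_def, uniformOn_univ]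

section Empirical

variable {α : Type*} [MeasurableSpace α] {n : ℕ}

noncomputable def empiricalMeasure (x : Fin n → α) : Measure α :=
  (uniformOn (Set.univ : Set (Fin n))).map x

instance [NeZero n] (x : Fin n → α) : IsProbabilityMeasure (empiricalMeasure x) :=
  Measure.isProbabilityMeasure_map measurable_from_top.aemeasurable

theorem empiricalMeasure_eq_one_of_forall_mem {s : Set α} (hs : MeasurableSet s) [NeZero n]
    {x : Fin n → α} (hx : ∀ i, x i ∈ s) : empiricalMeasure x s = 1 := by
  have hpre : x ⁻¹' s = Set.univ := Set.eq_univ_of_forall hx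
  rw [empiricalMeasure, Measure.map_apply measurable_from_top hs, hpre, measure_univ]

theorem integral_pi_empiricalMeasure [NeZero n] {k : ℕ} {q : (Fin k → α) → ℝ}
    (hq : Measurable q) (x : Fin n → α) :
    ∫ z, q z ∂(Measure.pi fun _ : Fin k => empiricalMeasure x)
      = ((n : ℝ) ^ k)⁻¹ * ∑ f : Fin k → Fin n, q (x ∘ f) := by
  have hmp : MeasurePreserving (fun f : Fin k → Fin n => x ∘ f)
      (Measure.pi fun _ => uniformOn Set.univ) (Measure.pi fun _ => empiricalMeasure x) :=
    measurePreserving_pi _ _ fun _ => ⟨measurable_from_top, rfl⟩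
  rw [← hmp.map_eq, integral_map hmp.measurable.aemeasurable hq.aestronglyMeasurable,
    ← uniformOn_pi, Set.pi_univ, integral_uniformOn_univ]
  simp

end Empirical

theorem Nat.mul_pow_sub_descFactorial_le (n k : ℕ) :
    (n : ℝ) * (n ^ k - n.descFactorial k) ≤ k ^ 2 * n ^ k := by
  induction k with
  | zero => simp
  | succ k ih =>
    rcases le_or_gt n k with hnk | hkn
    · rw [Nat.descFactorial_eq_zero_iff_lt.2 (by omega)]
      have hnk' : (n : ℝ) ≤ k := by exact_mod_cast hnk
      push_cast
      nlinarith [pow_nonneg n.cast_nonneg (k + 1) (M₀ := ℝ)]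
    · have hD : (n.descFactorial k : ℝ) ≤ n ^ k := by exact_mod_cast n.descFactorial_le_pow k
      rw [Nat.descFactorial_succ, Nat.cast_mul, Nat.cast_sub hkn.le]
      calc (n : ℝ) * (n ^ (k + 1) - (n - k) * n.descFactorial k)
          = n * (n * (n ^ k - n.descFactorial k)) + n * k * n.descFactorial k := by ring
        _ ≤ n * (k ^ 2 * n ^ k) + n * k * n ^ k := by gcongr
        _ = (k ^ 2 + k) * n ^ (k + 1) := by ring
        _ ≤ ((k + 1 : ℕ) : ℝ) ^ 2 * n ^ (k + 1) := by push_cast; gcongr; linarith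

theorem card_filter_not_injective_s15 (n k : ℕ) :
    (#{f : Fin k → Fin n | ¬ f.Injective} : ℝ) = n ^ k - n.descFactorial k := by
  have hinj : #{f : Fin k → Fin n | f.Injective} = n.descFactorial k := by
    rw [← Fintype.card_subtype, Fintype.card_congr (Equiv.subtypeInjectiveEquivEmbedding _ _)]
    simp [Fintype.card_embedding_eq]
  have htotal := card_filter_add_card_filter_not (s := univ) fun f : Fin k → Fin n => f.Injective
  rw [hinj, card_univ, Fintype.card_fun, Fintype.card_fin, Fintype.card_fin] at htotal
  rw [eq_sub_iff_add_eq']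
  exact_mod_cast htotal

section Sampling

variable {α : Type*} [MeasurableSpace α] (μ : Measure α) [IsProbabilityMeasure μ]
  {s : Set α} {k : ℕ} {q : (Fin k → α) → ℝ} {C : ℝ} {ι : Type*} [Fintype ι]

theorem ae_norm_comp_le (hs : MeasurableSet s) (hμs : μ s = 1)
    (hC : ∀ z ∈ Set.univ.pi fun _ => s, ‖q z‖ ≤ C) (f : Fin k → ι) :
    ∀ᵐ x ∂(Measure.pi fun _ : ι => μ), ‖q (x ∘ f)‖ ≤ C := by
  filter_upwards [ae_forall_mem_pi μ hs hμs] with x hx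
  exact hC _ fun i _ => hx (f i)

theorem integrable_comp_pi (hs : MeasurableSet s) (hμs : μ s = 1) (hq : Measurable q)
    (hC : ∀ z ∈ Set.univ.pi fun _ => s, ‖q z‖ ≤ C) (f : Fin k → ι) :
    Integrable (fun x : ι → α => q (x ∘ f)) (Measure.pi fun _ => μ) :=
  .of_bound (hq.comp (by fun_prop)).aestronglyMeasurable C (ae_norm_comp_le μ hs hμs hC f)

theorem norm_integral_comp_le (hs : MeasurableSet s) (hμs : μ s = 1)
    (hC : ∀ z ∈ Set.univ.pi fun _ => s, ‖q z‖ ≤ C) (f : Fin k → ι) :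
    ‖∫ x, q (x ∘ f) ∂(Measure.pi fun _ : ι => μ)‖ ≤ C := by
  simpa using norm_integral_le_of_norm_le_const (ae_norm_comp_le μ hs hμs hC f)

theorem integral_average_comp_le (hs : MeasurableSet s) (hμs : μ s = 1) (hq : Measurable q)
    (hC : ∀ z ∈ Set.univ.pi fun _ => s, ‖q z‖ ≤ C) (n : ℕ) [NeZero n] :
    ∫ x, ((n : ℝ) ^ k)⁻¹ * ∑ f : Fin k → Fin n, q (x ∘ f) ∂(Measure.pi fun _ => μ)
      ≤ ∫ z, q z ∂(Measure.pi fun _ => μ) + 2 * C * k ^ 2 / n := by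
  set I := ∫ z, q z ∂(Measure.pi fun _ => μ)
  have hI : ‖I‖ ≤ C := norm_integral_comp_le μ hs hμs hC id
  have hn : (0 : ℝ) < n := by exact_mod_cast Nat.pos_of_neZero n
  have hterm (f : Fin k → Fin n) :
      ∫ x, q (x ∘ f) ∂(Measure.pi fun _ => μ) - I ≤ if f.Injective then 0 else 2 * C := by
    split_ifs with hf
    · exact sub_nonpos.2 (integral_comp_pi_of_injective μ hq hf).le
    · have := norm_integral_comp_le μ hs hμs hC f
      rw [Real.norm_eq_abs, abs_le] at this hI
      linarith
  calc ∫ x, ((n : ℝ) ^ k)⁻¹ * ∑ f : Fin k → Fin n, q (x ∘ f) ∂(Measure.pi fun _ => μ)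
      = I + ((n : ℝ) ^ k)⁻¹ *
          ∑ f : Fin k → Fin n, (∫ x, q (x ∘ f) ∂(Measure.pi fun _ => μ) - I) := by
        rw [integral_const_mul,
          integral_finsetSum _ fun f _ => integrable_comp_pi μ hs hμs hq hC f,
          sum_sub_distrib, sum_const, card_univ, Fintype.card_fun, Fintype.card_fin,
          Fintype.card_fin, nsmul_eq_mul]
        field_simp
        push_cast
        ring
    _ ≤ I + ((n : ℝ) ^ k)⁻¹ * (2 * C * #{f : Fin k → Fin n | ¬ f.Injective}) := by
        gcongr
        refine (sum_le_sum fun f _ => hterm f).trans_eq ?_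
        simp [sum_ite, mul_comm]
    _ ≤ I + 2 * C * k ^ 2 / n := by
        have hC0 : 0 ≤ C := (norm_nonneg I).trans hI
        have hfrac : ((n : ℝ) ^ k - n.descFactorial k) / n ^ k ≤ k ^ 2 / n := by
          rw [div_le_div_iff₀ (by positivity) hn]
          linarith [Nat.mul_pow_sub_descFactorial_le n k]
        rw [card_filter_not_injective_s15]
        gcongr
        calc ((n : ℝ) ^ k)⁻¹ * (2 * C * (n ^ k - n.descFactorial k))
            = 2 * C * ((n ^ k - n.descFactorial k) / n ^ k) := by ring
          _ ≤ 2 * C * (k ^ 2 / n) := by gcongr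
          _ = 2 * C * k ^ 2 / n := by ring

theorem exists_forall_mem_average_comp_le (hs : MeasurableSet s) (hμs : μ s = 1)
    (hq : Measurable q) (hC : ∀ z ∈ Set.univ.pi fun _ => s, ‖q z‖ ≤ C) (n : ℕ) [NeZero n] :
    ∃ x : Fin n → α, (∀ i, x i ∈ s) ∧ ((n : ℝ) ^ k)⁻¹ * ∑ f : Fin k → Fin n, q (x ∘ f)
      ≤ ∫ z, q z ∂(Measure.pi fun _ => μ) + 2 * C * k ^ 2 / n := by
  have hint : Integrable (fun x : Fin n → α => ((n : ℝ) ^ k)⁻¹ * ∑ f : Fin k → Fin n, q (x ∘ f))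
      (Measure.pi fun _ => μ) :=
    (integrable_finsetSum _ fun f _ => integrable_comp_pi μ hs hμs hq hC f).const_mul _
  obtain ⟨x, hx, hle⟩ := exists_notMem_null_le_integral hint (ae_forall_mem_pi μ hs hμs)
  exact ⟨x, not_not.1 hx, hle.trans (integral_average_comp_le μ hs hμs hq hC n)⟩

theorem exists_average_comp_le_integral_add (hs : MeasurableSet s) (hμs : μ s = 1)
    (hq : Measurable q) (hC : ∀ z ∈ Set.univ.pi fun _ => s, ‖q z‖ ≤ C) {ε : ℝ} (hε : 0 < ε) :
    ∃ n : ℕ, 1 ≤ n ∧ ∃ x : Fin n → α, (∀ i, x i ∈ s) ∧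
      ((n : ℝ) ^ k)⁻¹ * ∑ f : Fin k → Fin n, q (x ∘ f) ≤ ∫ z, q z ∂(Measure.pi fun _ => μ) + ε := by
  obtain ⟨n, hn⟩ := exists_nat_gt (2 * C * k ^ 2 / ε)
  obtain ⟨x, hx, hle⟩ := exists_forall_mem_average_comp_le μ hs hμs hq hC (n + 1)
  have hε' : 2 * C * k ^ 2 / (n + 1 : ℕ) ≤ ε := by
    rw [div_le_iff₀ (by positivity)]
    rw [div_lt_iff₀ hε] at hn
    push_cast
    linarith
  exact ⟨n + 1, by omega, x, hx, hle.trans (by gcongr)⟩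

end Sampling

theorem stmt15_general (e k : ℕ)
    (Θ : Set (Fin e → ℝ)) (hne : Θ.Nonempty) (hcpt : IsCompact Θ)
    (q : (Fin k → Fin e → ℝ) → ℝ) (hq : Continuous q) :
    sInf {r : ℝ | ∃ n : ℕ, 1 ≤ n ∧ ∃ x : Fin n → Fin e → ℝ, (∀ i, x i ∈ Θ) ∧
        r = ((n : ℝ) ^ k)⁻¹ * ∑ f : Fin k → Fin n, q (x ∘ f)}
      = sInf {r : ℝ | ∃ μ : Measure (Fin e → ℝ),
          IsProbabilityMeasure μ ∧ μ Θ = 1 ∧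
          r = ∫ z, q z ∂(Measure.pi fun _ : Fin k => μ)} := by
  have hΘ : MeasurableSet Θ := hcpt.measurableSet
  obtain ⟨C, hC⟩ := (isCompact_univ_pi fun _ => hcpt).exists_bound_of_continuousOn hq.continuousOn
  set A := {r : ℝ | ∃ n : ℕ, 1 ≤ n ∧ ∃ x : Fin n → Fin e → ℝ, (∀ i, x i ∈ Θ) ∧
    r = ((n : ℝ) ^ k)⁻¹ * ∑ f : Fin k → Fin n, q (x ∘ f)}
  set B := {r : ℝ | ∃ μ : Measure (Fin e → ℝ), IsProbabilityMeasure μ ∧ μ Θ = 1 ∧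
    r = ∫ z, q z ∂(Measure.pi fun _ : Fin k => μ)}
  have hAB : A ⊆ B := by
    rintro _ ⟨n, hn, x, hx, rfl⟩
    have : NeZero n := ⟨by omega⟩
    exact ⟨empiricalMeasure x, inferInstance, empiricalMeasure_eq_one_of_forall_mem hΘ hx,
      (integral_pi_empiricalMeasure hq.measurable x).symm⟩
  have hA : A.Nonempty :=
    let ⟨θ, hθ⟩ := hne
    ⟨_, 1, le_rfl, fun _ => θ, fun _ => hθ, rfl⟩
  have hB : BddBelow B := by
    refine ⟨-C, ?_⟩
    rintro _ ⟨μ, _, hμ, rfl⟩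
    exact neg_le_of_abs_le (norm_integral_comp_le μ hΘ hμ hC id)
  refine le_antisymm (le_csInf (hA.mono hAB) ?_) (csInf_le_csInf hB hA hAB)
  rintro _ ⟨μ, _, hμ, rfl⟩
  refine le_of_forall_pos_le_add fun ε hε => ?_
  obtain ⟨n, hn, x, hx, hle⟩ := exists_average_comp_le_integral_add μ hΘ hμ hq.measurable hC hε
  exact (csInf_le (hB.mono hAB) ⟨n, hn, x, hx, rfl⟩).trans hle

theorem stmt15 (e k : ℕ) (he : 1 ≤ e) (hk : 1 ≤ k)
    (Θ : Set (Fin e → ℝ)) (hne : Θ.Nonempty) (hcpt : IsCompact Θ)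
    (q : (Fin k → Fin e → ℝ) → ℝ) (hq : Continuous q) :
    sInf {r : ℝ | ∃ n : ℕ, 1 ≤ n ∧ ∃ x : Fin n → Fin e → ℝ, (∀ i, x i ∈ Θ) ∧
        r = ((n : ℝ) ^ k)⁻¹ * ∑ f : Fin k → Fin n, q (x ∘ f)}
      = sInf {r : ℝ | ∃ μ : Measure (Fin e → ℝ),
          IsProbabilityMeasure μ ∧ μ Θ = 1 ∧
          r = ∫ z, q z ∂(Measure.pi fun _ : Fin k => μ)} :=
  stmt15_general e k Θ hne hcpt q hq
end

section
/- Let v, n ≥ 1 be integers, let H : Fin v → Fin v → ℕ, and let X : Fin n → Fin n → ℝ. Define hom(H; X) = ∑_{f : Fin v → Fin n} ∏_{i, j ∈ Fin v} (X (f i) (f j))^{H i j}, and for w ≥ 1 and B : Fin w → Fin w → ℕ define inj(B; X) = ∑_{g : Fin w → Fin n injective} ∏_{a, b ∈ Fin w} (X (g a) (g b))^{B a b}. For a surjection s : Fin v → Fin w, define the quotient H/s : Fin w → Fin w → ℕ by (H/s)(a, b) = ∑_{i ∈ s⁻¹(a)} ∑_{j ∈ s⁻¹(b)} H i j. Then hom(H;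 X) = ∑_{w = 1}^{v} (1/w!) · ∑_{s : Fin v → Fin w surjective} inj(H/s; X). -/
/-- Weighted graph homomorphism number `hom(H; X)`. -/
noncomputable def homNum {v n : ℕ} (H : Fin v → Fin v → ℕ) (X : Fin n → Fin n → ℝ) : ℝ :=
  ∑ f : Fin v → Fin n, ∏ i : Fin v, ∏ j : Fin v, (X (f i) (f j)) ^ (H i j)

/-- Injective weighted graph homomorphism number `inj(B; X)`. -/
noncomputable def injNum {w n : ℕ} (B : Fin w → Fin w → ℕ) (X : Fin n → Fin n → ℝ) : ℝ :=
  ∑ g ∈ Finset.univ.filter (fun g : Fin w → Fin n => Function.Injective g),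
    ∏ a : Fin w, ∏ b : Fin w, (X (g a) (g b)) ^ (B a b)

/-- The quotient multigraph `H/s` along a map `s`: `(H/s)(a,b) = ∑_{i ∈ s⁻¹ a, j ∈ s⁻¹ b} H i j`. -/
def quotH {v w : ℕ} (H : Fin v → Fin v → ℕ) (s : Fin v → Fin w) : Fin w → Fin w → ℕ :=
  fun a b => ∑ i ∈ Finset.univ.filter (fun i => s i = a),
    ∑ j ∈ Finset.univ.filter (fun j => s j = b), H i j


/-! A map `f : Fin v → Fin n` factors as an injection `g : Fin w → Fin n` after a surjection
`s : Fin v → Fin w` exactly when `w` is the size of the image of `f`, and then in exactly `w!`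
ways, one for each bijection `Fin w ≃ image f`. Since the weight of `g` in `H/s` is the weight
of `g ∘ s` in `H`, the `w`-th summand on the right counts every `f` with image of size `w`
exactly once. -/

open Finset Function
open scoped Nat

theorem prod_comp_fiberwise {ι κ M : Type*} [Fintype ι] [Fintype κ] [DecidableEq κ]
    [CommMonoid M] (g : ι → κ) (F : κ → ι → M) :
    ∏ i, F (g i) i = ∏ k, ∏ i with g i = k, F k i := by
  rw [← prod_fiberwise univ g]
  exact prod_congr rfl fun k _ => prod_congr rfl fun i hi => by rw [(mem_filter.1 hi).2]

theorem prod_pow_quotH {M : Type*} [CommMonoid M] {v w : ℕ} (H : Fin v → Fin v → ℕ)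
    (s : Fin v → Fin w) (x : Fin w → Fin w → M) :
    ∏ a, ∏ b, x a b ^ quotH H s a b = ∏ i, ∏ j, x (s i) (s j) ^ H i j :=
  calc ∏ a, ∏ b, x a b ^ quotH H s a b
      = ∏ a, ∏ i with s i = a, ∏ b, ∏ j with s j = b, x a b ^ H i j := by
        simp only [quotH, ← prod_pow_eq_pow_sum]
        exact prod_congr rfl fun a _ => prod_comm
    _ = ∏ a, ∏ i with s i = a, ∏ j, x a (s j) ^ H i j :=
        prod_congr rfl fun a _ => prod_congr rfl fun i _ =>
          (prod_comp_fiberwise s fun b j => x a b ^ H i j).symm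
    _ = ∏ i, ∏ j, x (s i) (s j) ^ H i j := (prod_comp_fiberwise s _).symm

section Factorization

variable {α β : Type*} [Fintype α] [DecidableEq α] [Fintype β] [DecidableEq β]

noncomputable def surjInjFactorizationEquiv (f : α → β) (w : ℕ) :
    {p : (α → Fin w) × (Fin w → β) // Surjective p.1 ∧ Injective p.2 ∧ p.2 ∘ p.1 = f} ≃
      (Fin w ≃ univ.image f) where
  toFun p :=
    have hrange : ∀ a, p.1.2 a ∈ univ.image f := fun a => by
      obtain ⟨i, rfl⟩ := p.2.1 a
      exact mem_image.2 ⟨i, mem_univ _, (congrFun p.2.2.2 i).symm⟩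
    Equiv.ofBijective (fun a => ⟨p.1.2 a, hrange a⟩)
      ⟨fun a b h => p.2.2.1 (congrArg Subtype.val h), fun ⟨y, hy⟩ => by
        obtain ⟨i, -, rfl⟩ := mem_image.1 hy
        exact ⟨p.1.1 i, Subtype.ext (congrFun p.2.2.2 i)⟩⟩
  invFun e :=
    ⟨(fun i => e.symm ⟨f i, mem_image_of_mem f (mem_univ i)⟩, fun a => e a),
      fun a => by
        obtain ⟨i, -, hi⟩ := mem_image.1 (e a).2
        exact ⟨i, (Equiv.symm_apply_eq e).2 (Subtype.ext hi)⟩,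
      fun a b h => e.injective (Subtype.ext h),
      funext fun i => by simp⟩
  left_inv p := Subtype.ext <| Prod.ext (funext fun i => (Equiv.symm_apply_eq _).2 <|
    Subtype.ext (congrFun p.2.2.2 i).symm) rfl
  right_inv e := Equiv.ext fun a => rfl

theorem card_surjInjFactorizations (f : α → β) (w : ℕ) :
    #{p : (α → Fin w) × (Fin w → β) | Surjective p.1 ∧ Injective p.2 ∧ p.2 ∘ p.1 = f} =
      if #(univ.image f) = w then w ! else 0 := by
  rw [← Fintype.card_subtype, Fintype.card_congr (surjInjFactorizationEquiv f w)]
  split_ifs with hw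
  · have hcard : Fintype.card (Fin w) = Fintype.card (univ.image f) := by
      rw [Fintype.card_fin, Fintype.card_coe, hw]
    rw [Fintype.card_equiv (Fintype.equivOfCardEq hcard), Fintype.card_fin]
  · exact Fintype.card_eq_zero_iff.2 ⟨fun e => hw <| by
      simpa only [Fintype.card_fin, Fintype.card_coe] using (Fintype.card_congr e).symm⟩

theorem sum_surjective_injective_comp {M : Type*} [AddCommMonoid M] (F : (α → β) → M)
    (w : ℕ) :
    ∑ s : α → Fin w with Surjective s, ∑ g : Fin w → β with Injective g, F (g ∘ s) =
      w ! • ∑ f with #(univ.image f) = w, F f := by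
  rw [← sum_product', ← sum_fiberwise _ (fun p => p.2 ∘ p.1), sum_filter, smul_sum]
  refine sum_congr rfl fun f _ => ?_
  have hfiber : (({s | Surjective s} : Finset (α → Fin w)) ×ˢ
      ({g | Injective g} : Finset (Fin w → β))).filter (fun p => p.2 ∘ p.1 = f) =
        ({p | Surjective p.1 ∧ Injective p.2 ∧ p.2 ∘ p.1 = f} : Finset _) := by
    ext p
    simp [and_assoc]
  rw [hfiber, sum_congr rfl fun p hp => congrArg F (mem_filter.1 hp).2.2.2, sum_const,
    card_surjInjFactorizations, ite_smul, zero_smul, smul_ite, smul_zero]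

end Factorization

theorem stmt18_general (v n : ℕ) (hv : 1 ≤ v)
    (H : Fin v → Fin v → ℕ) (X : Fin n → Fin n → ℝ) :
    homNum H X = ∑ w ∈ Finset.Icc 1 v, (Nat.factorial w : ℝ)⁻¹ *
      ∑ s ∈ Finset.univ.filter (fun s : Fin v → Fin w => Function.Surjective s),
        injNum (quotH H s) X := by
  set W : (Fin v → Fin n) → ℝ := fun f => ∏ i, ∏ j, X (f i) (f j) ^ H i j
  have hinj (w : ℕ) (s : Fin v → Fin w) :
      injNum (quotH H s) X = ∑ g : Fin w → Fin n with Injective g, W (g ∘ s) :=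
    sum_congr rfl fun g _ => prod_pow_quotH H s _
  have himage (f : Fin v → Fin n) : #(univ.image f) ∈ Icc 1 v :=
    mem_Icc.2 ⟨card_pos.2 (univ_nonempty_iff.2 ⟨⟨0, hv⟩⟩ |>.image f),
      card_image_le.trans (card_fin v).le⟩
  refine (sum_fiberwise_of_maps_to (fun f _ => himage f) W).symm.trans
    (sum_congr rfl fun w _ => ?_)
  simp only [hinj, sum_surjective_injective_comp, nsmul_eq_mul]
  rw [inv_mul_cancel_left₀ (by positivity)]

theorem stmt18 (v n : ℕ) (hv : 1 ≤ v) (hn : 1 ≤ n)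
    (H : Fin v → Fin v → ℕ) (X : Fin n → Fin n → ℝ) :
    homNum H X = ∑ w ∈ Finset.Icc 1 v, (Nat.factorial w : ℝ)⁻¹ *
      ∑ s ∈ Finset.univ.filter (fun s : Fin v → Fin w => Function.Surjective s),
        injNum (quotH H s) X :=
  stmt18_general v n hv H X
end

section
/- Let m, M ≥ 1 be integers with m dividing M. Then the pushforward of the product measure ⨂_{i ∈ Fin M} 𝒩(0, 1/M) on (Fin M → ℝ) under the block-sum map T_{d_{m,M}} (which sends x : Fin M → ℝ to the vector in Fin m → ℝ whose i-th entry is the sum of the entries of x over the i-th consecutive block of size M/m) equals the product measure ⨂_{i ∈ Fin m} 𝒩(0, 1/m) on (Fin m → ℝ). -/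
open MeasureTheory ProbabilityTheory
open scoped NNReal

/-!
Reindexing the coordinates by the fibres of `f` writes the product measure on `Fin n → ℝ` as a
product over `i` of product measures on the fibres, so `binOp f` acts fibrewise and the block sums are
independent. A sum of `k` independent `𝒩(0, v)` variables is `𝒩(0, k v)` (characteristic functions
multiply), and each block of `d_{m,M}` has `M / m` elements, giving variance `(M / m) / M = 1 / m`.
-/

lemma map_sum_pi_gaussianReal (ι : Type*) [Fintype ι] (μ : ℝ) (v : ℝ≥0) :
    (Measure.pi fun _ : ι => gaussianReal μ v).map (fun x => ∑ i, x i)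
      = gaussianReal (Fintype.card ι * μ) (Fintype.card ι * v) := by
  refine Measure.ext_of_charFun (funext fun t => ?_)
  rw [charFun_map_sum_pi_eq_prod, Finset.prod_const, Finset.card_univ, Pi.pow_apply,
    charFun_gaussianReal, charFun_gaussianReal, ← Complex.exp_nat_mul]
  push_cast
  ring_nf

lemma measurePreserving_piCurry_symm {ι : Type*} [Fintype ι] {κ : ι → Type*}
    [∀ i, Fintype (κ i)] {X : (i : ι) → κ i → Type*} [∀ i j, MeasurableSpace (X i j)]
    (μ : (i : ι) → (j : κ i) → Measure (X i j)) [∀ i j, IsProbabilityMeasure (μ i j)] :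
    MeasurePreserving (MeasurableEquiv.piCurry X).symm
      (Measure.pi fun i => Measure.pi fun j => μ i j) (Measure.pi fun p => μ p.1 p.2) := by
  refine ⟨(MeasurableEquiv.piCurry X).symm.measurable, ?_⟩
  simp_rw [← Measure.infinitePi_eq_pi]
  exact Measure.infinitePi_map_piCurry_symm μ

lemma map_binOp_pi_gaussianReal {n m : ℕ} (f : Fin n → Fin m) (v : ℝ≥0) :
    (Measure.pi fun _ : Fin n => gaussianReal 0 v).map (binOp f)
      = Measure.pi fun i => gaussianReal 0 (Fintype.card {j // f j = i} * v) := by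
  set e := Equiv.sigmaFiberEquiv f
  have hpc := measurePreserving_piCongrLeft (fun _ : Fin n => gaussianReal 0 v) e
  have hcurry := measurePreserving_piCurry_symm
    (fun (i : Fin m) (_ : {j // f j = i}) => gaussianReal 0 v)
  have hbin : Measurable (binOp f) := by unfold binOp; fun_prop
  have hsum : (binOp f ∘ MeasurableEquiv.piCongrLeft (fun _ => ℝ) e) ∘
      (MeasurableEquiv.piCurry fun (i : Fin m) (_ : {j // f j = i}) => ℝ).symm
        = fun y i => ∑ j, y i j := by
    funext y i
    simp only [Function.comp_apply, binOp]
    rw [Finset.sum_subtype _ (p := fun j => f j = i) (by simp)]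
    exact Finset.sum_congr rfl fun j _ => MeasurableEquiv.piCongrLeft_apply_apply e _ ⟨i, j⟩
  rw [← hpc.map_eq, ← hcurry.map_eq, Measure.map_map hbin hpc.measurable,
    Measure.map_map (hbin.comp hpc.measurable) hcurry.measurable, hsum,
    Measure.pi_map_pi (fun _ => by fun_prop)]
  refine congrArg Measure.pi (funext fun i => ?_)
  simpa using map_sum_pi_gaussianReal {j // f j = i} 0 v

lemma Finset.filter_range_div_eq_Ico {N k i : ℕ} (hk : 0 < k) (hN : i * k + k ≤ N) :
    {x ∈ range N | x / k = i} = Ico (i * k) (i * k + k) := by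
  ext x
  simp only [mem_filter, mem_range, mem_Ico, Nat.div_eq_iff hk]
  omega

lemma card_fiber_dmap_s19 (m M : ℕ) (hM : 0 < M) (hdvd : m ∣ M) (i : Fin m) :
    Fintype.card {j // dmap m M hM hdvd j = i} = M / m := by
  have hk : 0 < M / m := Nat.div_pos (Nat.le_of_dvd hM hdvd) (Nat.pos_of_dvd_of_pos hdvd hM)
  have hblock : i * (M / m) + M / m ≤ M := by
    calc i * (M / m) + M / m = (i + 1) * (M / m) := by ring
      _ ≤ m * (M / m) := Nat.mul_le_mul_right _ i.isLt
      _ = M := Nat.mul_div_cancel' hdvd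
  have hval (x : Fin M) : dmap m M hM hdvd x = i ↔ (x : ℕ) / (M / m) = i := Fin.ext_iff
  simp_rw [Fintype.card_subtype, hval, Finset.card_filter]
  rw [Fin.sum_univ_eq_sum_range (fun x => if x / (M / m) = i then 1 else 0), ← Finset.card_filter,
    Finset.filter_range_div_eq_Ico hk hblock, Nat.card_Ico, Nat.add_sub_cancel_left]

theorem stmt19_general (m M : ℕ) (hM : 1 ≤ M) (hdvd : m ∣ M) :
    (Measure.pi (fun _ : Fin M => gaussianReal 0 ((M : ℝ≥0))⁻¹)).map
        (fun x : Fin M → ℝ => binOp (dmap m M hM hdvd) x)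
      = Measure.pi (fun _ : Fin m => gaussianReal 0 ((m : ℝ≥0))⁻¹) := by
  rw [map_binOp_pi_gaussianReal]
  refine congrArg Measure.pi (funext fun i => ?_)
  have hm : (m : ℝ≥0) ≠ 0 := by exact_mod_cast (Nat.pos_of_dvd_of_pos hdvd hM).ne'
  rw [card_fiber_dmap_s19, Nat.cast_div hdvd hm]
  field_simp

theorem stmt19 (m M : ℕ) (hm : 1 ≤ m) (hM : 1 ≤ M) (hdvd : m ∣ M) :
    (Measure.pi (fun _ : Fin M => gaussianReal 0 ((M : ℝ≥0))⁻¹)).map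
        (fun x : Fin M → ℝ => binOp (dmap m M hM hdvd) x)
      = Measure.pi (fun _ : Fin m => gaussianReal 0 ((m : ℝ≥0))⁻¹) :=
  stmt19_general m M hM hdvd
end
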